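/- arXiv:2107.06076 — 4 statements merged into one kernel-verified Lean document; each statement's English description precedes it below -/
import Mathlib

section
/- Under the hypotheses of a homogeneous Dubrovin–Frobenius manifold (structure constants $c^{\alpha\beta}_\gamma$ from a potential, Euler field $e^\gamma=(1-q_\gamma)u^\gamma+r^\gamma$, homogeneity $e^\lambda c^{\alpha\beta}_{\lambda\gamma}=(\delta-q_\alpha-q_\beta+q_\gamma)c^{\alpha\beta}_\gamma$, constants $\mu_\alpha=q_\alpha-\delta/2$ with $\mu_\nu c^{\nu\mu}_\nu=0$, and $g^{\alpha\beta}=e^\gamma c^{\alpha\beta}_\gamma$), the following identity holds: $\frac{1}{12}\Big(\partial_\nu(g^{\nu\mu}c^{\alpha\beta}_\mu)+\tfrac{1}{2}c^{\mu\nu}_\nu c^{\alpha\beta}_\mu\Big) = \frac{3-\mu_\alpha-\mu_\beta}{24}\,c^{\gamma\sigma}_\gamma c^{\alpha\beta}_\sigma + \frac{1}{24}\big(c^{\alpha\lambda}_{\nu\lambda}g^{\nu\beta}+g^{\alpha\nu}c^{\beta\lambda}_{\nu\lambda}\big)$, where $c^{\alpha\beta}_{\gamma\delta}=\partial_\delta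 c^{\alpha\beta}_\gamma$ and Einstein summation is used throughout. -/
open scoped BigOperators

/-- Equality of the `∂_x^3` coefficients of the genus-one parts of the
second DZ and DR Poisson operators: for a homogeneous Dubrovin–Frobenius
manifold,
`(1/12)(∂_ν(g^{νμ}c^{αβ}_μ) + (1/2) c^{μν}_ν c^{αβ}_μ)
 = ((3-μ_α-μ_β)/24) c^{γσ}_γ c^{αβ}_σ
   + (1/24)(c^{αλ}_{νλ} g^{νβ} + g^{αν} c^{βλ}_{νλ})`.
Here `c a b g` denotes `c^{ab}_g` and `c^{αβ}_{γδ} = ∂_δ c^{αβ}_γ`. -/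
theorem dx3_coefficient_identity (N : ℕ) (R : Type*) [CommRing R] [Algebra ℂ R]
    (D : Fin N → Derivation ℂ R R)
    (hcomm : ∀ a b : Fin N, ∀ x : R, D a (D b x) = D b (D a x))
    (u : Fin N → R) (hu : ∀ a b : Fin N, D a (u b) = if a = b then 1 else 0)
    (q r : Fin N → ℂ) (δ : ℂ)
    (c : Fin N → Fin N → Fin N → R)
    (hupsym : ∀ α β γ : Fin N, c α β γ = c β α γ)
    (hpot : ∀ α β γ δ' : Fin N, D δ' (c α β γ) = D γ (c α β δ'))
    (hassoc : ∀ α β γ m : Fin N,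
      (∑ ν, c α ν m * c β γ ν) = ∑ ν, c β ν m * c α γ ν)
    (e : Fin N → R)
    (he : ∀ γ : Fin N, e γ = (1 - q γ) • u γ + algebraMap ℂ R (r γ))
    (hhom : ∀ α β γ : Fin N,
      (∑ lam, e lam * D γ (c α β lam)) = (δ - q α - q β + q γ) • c α β γ)
    (μ : Fin N → ℂ) (hμ : ∀ α : Fin N, μ α = q α - δ / 2)
    (hmucontr : ∀ m : Fin N, (∑ ν, μ ν • c ν m ν) = 0)
    (g : Fin N → Fin N → R)
    (hg : ∀ α β : Fin N, g α β = ∑ γ, e γ * c α β γ)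
    (α β : Fin N) :
    (1/12 : ℂ) • ((∑ ν, ∑ m, D ν (g ν m * c α β m))
        + (1/2 : ℂ) • ∑ m, ∑ ν, c m ν ν * c α β m)
      = ((3 - μ α - μ β)/24) • (∑ γ, ∑ σ, c γ σ γ * c α β σ)
        + (1/24 : ℂ) • ((∑ ν, ∑ lam, D lam (c α lam ν) * g ν β)
            + ∑ ν, ∑ lam, g α ν * D lam (c β lam ν)) := by
  classical
  -- derivative of the Euler field components
  have hDe : ∀ a b : Fin N, D a (e b) = (1 - q b) • (if a = b then (1:R) else 0) := by
    intro a b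
    rw [he b, map_add, Derivation.map_smul, hu a b]
    simp
  -- Euler homogeneity in the "lower" form
  have hEuler : ∀ a b g' : Fin N,
      (∑ lam, e lam * D lam (c a b g')) = (δ - q a - q b + q g') • c a b g' := by
    intro a b g'
    rw [← hhom a b g']
    exact Finset.sum_congr rfl fun lam _ => by rw [hpot a b g' lam]
  -- symmetry of g
  have hgsym : ∀ a b : Fin N, g a b = g b a := by
    intro a b
    rw [hg, hg]
    exact Finset.sum_congr rfl fun γ' _ => by rw [hupsym a b]
  -- associativity variant
  have hassoc' : ∀ a b l g' : Fin N,
      (∑ ν, c a l ν * c b ν g') = ∑ ν, c l ν g' * c a b ν := by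
    intro a b l g'
    calc (∑ ν, c a l ν * c b ν g') = ∑ ν, c b ν g' * c l a ν := by
          refine Finset.sum_congr rfl fun ν _ => ?_
          rw [hupsym a l, mul_comm]
      _ = ∑ ν, c l ν g' * c b a ν := hassoc b l a g'
      _ = ∑ ν, c l ν g' * c a b ν :=
          Finset.sum_congr rfl fun ν _ => by rw [hupsym b a]
  -- abbreviations
  set X : R := ∑ m, (∑ ν, c ν m ν) * c α β m with hXdef
  set Y : R := ∑ m, q m • ((∑ ν, c ν m ν) * c α β m) with hYdef
  set A : R := ∑ ν, ∑ m, g ν m * D ν (c α β m) with hAdef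
  set Bab : R := ∑ lam, ∑ ν, (δ - q β - q ν + q lam) • (c α lam ν * c β ν lam) with hBabdef
  set Bba : R := ∑ lam, ∑ ν, (δ - q α - q ν + q lam) • (c β lam ν * c α ν lam) with hBbadef
  -- the key contraction lemma
  have key : ∀ a b : Fin N,
      (∑ ν, ∑ lam, D lam (c a lam ν) * g ν b)
        = (∑ ν, ((δ - q ν) • (∑ lam, c lam ν lam)) * c a b ν)
          + (∑ lam, ∑ ν, g lam ν * D lam (c a b ν))
          - ∑ lam, ∑ ν, (δ - q b - q ν + q lam) • (c a lam ν * c b ν lam) := by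
    intro a b
    have inner : ∀ lam g', (∑ ν, D lam (c a lam ν) * c b ν g')
        = (∑ ν, D lam (c lam ν g') * c a b ν)
          + (∑ ν, c lam ν g' * D lam (c a b ν))
          - ∑ ν, c a lam ν * D lam (c b ν g') := by
      intro lam g'
      have e1 : (∑ ν, (D lam (c a lam ν) * c b ν g' + c a lam ν * D lam (c b ν g')))
          = D lam (∑ ν, c a lam ν * c b ν g') := by
        rw [map_sum]
        refine Finset.sum_congr rfl fun ν _ => ?_
        rw [Derivation.leibniz, smul_eq_mul, smul_eq_mul]; ring
      have e2 : (∑ ν, (D lam (c lam ν g') * c a b ν + c lam ν g' * D lam (c a b ν)))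
          = D lam (∑ ν, c lam ν g' * c a b ν) := by
        rw [map_sum]
        refine Finset.sum_congr rfl fun ν _ => ?_
        rw [Derivation.leibniz, smul_eq_mul, smul_eq_mul]; ring
      have h1 : (∑ ν, (D lam (c a lam ν) * c b ν g' + c a lam ν * D lam (c b ν g')))
          = ∑ ν, (D lam (c lam ν g') * c a b ν + c lam ν g' * D lam (c a b ν)) := by
        rw [e1, e2, hassoc' a b lam g']
      rw [Finset.sum_add_distrib, Finset.sum_add_distrib] at h1
      linear_combination h1
    calc (∑ ν, ∑ lam, D lam (c a lam ν) * g ν b)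
        = ∑ lam, ∑ g', e g' * (∑ ν, D lam (c a lam ν) * c b ν g') := by
          rw [Finset.sum_comm]
          refine Finset.sum_congr rfl fun lam _ => ?_
          simp only [hg, Finset.mul_sum]
          rw [Finset.sum_comm]
          refine Finset.sum_congr rfl fun g' _ => Finset.sum_congr rfl fun ν _ => ?_
          rw [hupsym ν b]; ring
      _ = ∑ lam, ∑ g', (e g' * (∑ ν, D lam (c lam ν g') * c a b ν)
            + e g' * (∑ ν, c lam ν g' * D lam (c a b ν))
            - e g' * ∑ ν, c a lam ν * D lam (c b ν g')) := by
          refine Finset.sum_congr rfl fun lam _ => Finset.sum_congr rfl fun g' _ => ?_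
          rw [inner lam g']; ring
      _ = (∑ lam, ∑ g', e g' * (∑ ν, D lam (c lam ν g') * c a b ν))
            + (∑ lam, ∑ g', e g' * (∑ ν, c lam ν g' * D lam (c a b ν)))
            - ∑ lam, ∑ g', e g' * ∑ ν, c a lam ν * D lam (c b ν g') := by
          simp only [Finset.sum_add_distrib, Finset.sum_sub_distrib]
      _ = (∑ ν, ((δ - q ν) • (∑ lam, c lam ν lam)) * c a b ν)
            + (∑ lam, ∑ ν, g lam ν * D lam (c a b ν))
            - ∑ lam, ∑ ν, (δ - q b - q ν + q lam) • (c a lam ν * c b ν lam) := by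
          have hS1 : (∑ lam, ∑ g', e g' * (∑ ν, D lam (c lam ν g') * c a b ν))
              = ∑ ν, ((δ - q ν) • (∑ lam, c lam ν lam)) * c a b ν := by
            have step1 : (∑ lam, ∑ g', e g' * (∑ ν, D lam (c lam ν g') * c a b ν))
                = ∑ lam, ∑ ν, ((δ - q ν) • c lam ν lam) * c a b ν := by
              refine Finset.sum_congr rfl fun lam _ => ?_
              simp only [Finset.mul_sum]
              rw [Finset.sum_comm]
              refine Finset.sum_congr rfl fun ν _ => ?_
              have : (∑ g', e g' * (D lam (c lam ν g') * c a b ν))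
                  = (∑ g', e g' * D g' (c lam ν lam)) * c a b ν := by
                rw [Finset.sum_mul]
                refine Finset.sum_congr rfl fun g' _ => ?_
                rw [hpot lam ν g' lam]; ring
              rw [this, hEuler lam ν lam]
              congr 2
              ring
            rw [step1, Finset.sum_comm]
            refine Finset.sum_congr rfl fun ν _ => ?_
            rw [Finset.smul_sum, Finset.sum_mul]
          have hS2 : (∑ lam, ∑ g', e g' * (∑ ν, c lam ν g' * D lam (c a b ν)))
              = ∑ lam, ∑ ν, g lam ν * D lam (c a b ν) := by
            refine Finset.sum_congr rfl fun lam _ => ?_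
            simp only [Finset.mul_sum]
            rw [Finset.sum_comm]
            refine Finset.sum_congr rfl fun ν _ => ?_
            rw [hg lam ν, Finset.sum_mul]
            exact Finset.sum_congr rfl fun g' _ => by ring
          have hS3 : (∑ lam, ∑ g', e g' * ∑ ν, c a lam ν * D lam (c b ν g'))
              = ∑ lam, ∑ ν, (δ - q b - q ν + q lam) • (c a lam ν * c b ν lam) := by
            refine Finset.sum_congr rfl fun lam _ => ?_
            simp only [Finset.mul_sum]
            rw [Finset.sum_comm]
            refine Finset.sum_congr rfl fun ν _ => ?_
            have : (∑ g', e g' * (c a lam ν * D lam (c b ν g')))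
                = c a lam ν * (∑ g', e g' * D g' (c b ν lam)) := by
              rw [Finset.mul_sum]
              refine Finset.sum_congr rfl fun g' _ => ?_
              rw [hpot b ν g' lam]; ring
            rw [this, hEuler b ν lam, mul_smul_comm]
          rw [hS1, hS2, hS3]
  -- scalar contraction fact from hmucontr
  have hqsum : ∀ m : Fin N, (∑ ν, (q ν) • c ν m ν) = (δ/2) • ∑ ν, c ν m ν := by
    intro m
    have h0 : (∑ ν, ((q ν) • c ν m ν - (δ/2) • c ν m ν)) = 0 := by
      have := hmucontr m
      simp only [hμ, sub_smul] at this
      exact this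
    rw [Finset.sum_sub_distrib] at h0
    rw [Finset.smul_sum]
    exact sub_eq_zero.mp h0
  -- divergence of g
  have hdg : ∀ m : Fin N, (∑ ν, D ν (g ν m)) = (1 + δ/2 - q m) • ∑ ν, c ν m ν := by
    intro m
    have hν : ∀ ν : Fin N, D ν (g ν m)
        = (∑ g', e g' * D g' (c ν m ν)) + (1 - q ν) • c ν m ν := by
      intro ν
      rw [hg ν m, map_sum]
      have hterm : ∀ g' ∈ (Finset.univ : Finset (Fin N)), D ν (e g' * c ν m g')
          = e g' * D g' (c ν m ν)
            + (if ν = g' then (1 - q g') • c ν m g' else 0) := by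
        intro g' _
        rw [Derivation.leibniz, smul_eq_mul, smul_eq_mul, hDe, hpot ν m g' ν]
        by_cases h : ν = g'
        · subst h; simp [mul_smul_comm]
        · simp [h]
      rw [Finset.sum_congr rfl hterm, Finset.sum_add_distrib]
      congr 1
      rw [Finset.sum_ite_eq]
      simp
    calc (∑ ν, D ν (g ν m))
        = (∑ ν, (∑ g', e g' * D g' (c ν m ν))) + ∑ ν, (1 - q ν) • c ν m ν := by
          rw [← Finset.sum_add_distrib]
          exact Finset.sum_congr rfl fun ν _ => hν ν
      _ = ((δ - q m) • ∑ ν, c ν m ν) + ((∑ ν, c ν m ν) - (δ/2) • ∑ ν, c ν m ν) := by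
          congr 1
          · rw [Finset.smul_sum]
            refine Finset.sum_congr rfl fun ν _ => ?_
            rw [hEuler ν m ν]
            congr 1
            ring
          · simp only [sub_smul, one_smul]
            rw [Finset.sum_sub_distrib, hqsum m]
      _ = (1 + δ/2 - q m) • ∑ ν, c ν m ν := by
          match_scalars
          ring
  -- the first LHS sum
  have hLHS1 : (∑ ν, ∑ m, D ν (g ν m * c α β m))
      = (∑ m, ((1 + δ/2 - q m) • (∑ ν, c ν m ν)) * c α β m) + A := by
    calc (∑ ν, ∑ m, D ν (g ν m * c α β m))
        = ∑ m, ∑ ν, (D ν (g ν m) * c α β m + g ν m * D ν (c α β m)) := by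
          rw [Finset.sum_comm]
          refine Finset.sum_congr rfl fun m _ => Finset.sum_congr rfl fun ν _ => ?_
          rw [Derivation.leibniz, smul_eq_mul, smul_eq_mul]; ring
      _ = (∑ m, (∑ ν, D ν (g ν m)) * c α β m) + ∑ m, ∑ ν, g ν m * D ν (c α β m) := by
          rw [← Finset.sum_add_distrib]
          refine Finset.sum_congr rfl fun m _ => ?_
          rw [Finset.sum_add_distrib, Finset.sum_mul]
      _ = (∑ m, ((1 + δ/2 - q m) • (∑ ν, c ν m ν)) * c α β m) + A := by
          congr 1
          · exact Finset.sum_congr rfl fun m _ => by rw [hdg m]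
          · rw [hAdef, Finset.sum_comm]
  have h1 : (∑ m, ((1 + δ/2 - q m) • (∑ ν, c ν m ν)) * c α β m) = (1 + δ/2) • X - Y := by
    rw [hXdef, hYdef, Finset.smul_sum, ← Finset.sum_sub_distrib]
    refine Finset.sum_congr rfl fun m _ => ?_
    rw [smul_mul_assoc, sub_smul]
  have h2 : ∀ a b : Fin N, (∑ ν, ((δ - q ν) • (∑ lam, c lam ν lam)) * c a b ν)
      = δ • (∑ m, (∑ ν, c ν m ν) * c a b m) - ∑ m, q m • ((∑ ν, c ν m ν) * c a b m) := by
    intro a b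
    rw [Finset.smul_sum, ← Finset.sum_sub_distrib]
    refine Finset.sum_congr rfl fun ν _ => ?_
    rw [smul_mul_assoc, sub_smul]
  have h3 : (∑ m, ∑ ν, c m ν ν * c α β m) = X := by
    rw [hXdef]
    refine Finset.sum_congr rfl fun m _ => ?_
    rw [Finset.sum_mul]
    exact Finset.sum_congr rfl fun ν _ => by rw [hupsym m ν]
  have h4 : (∑ γ', ∑ σ, c γ' σ γ' * c α β σ) = X := by
    rw [hXdef, Finset.sum_comm]
    exact Finset.sum_congr rfl fun σ _ => (Finset.sum_mul _ _ _).symm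
  -- T1
  have hT1 : (∑ ν, ∑ lam, D lam (c α lam ν) * g ν β) = ((δ • X - Y) + A) - Bab := by
    rw [key α β, h2 α β, ← hXdef, ← hYdef, ← hBabdef]
  -- T2
  have hT2 : (∑ ν, ∑ lam, g α ν * D lam (c β lam ν)) = ((δ • X - Y) + A) - Bba := by
    have flip : (∑ ν, ∑ lam, g α ν * D lam (c β lam ν))
        = ∑ ν, ∑ lam, D lam (c β lam ν) * g ν α := by
      refine Finset.sum_congr rfl fun ν _ => Finset.sum_congr rfl fun lam _ => ?_
      rw [hgsym α ν, mul_comm]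
    rw [flip, key β α]
    have r1 : (∑ ν, ((δ - q ν) • (∑ lam, c lam ν lam)) * c β α ν) = δ • X - Y := by
      rw [h2 β α, hXdef, hYdef]
      congr 1
      · congr 1
        exact Finset.sum_congr rfl fun m _ => by rw [hupsym β α]
      · exact Finset.sum_congr rfl fun m _ => by rw [hupsym β α]
    have r2 : (∑ lam, ∑ ν, g lam ν * D lam (c β α ν)) = A := by
      rw [hAdef]
      exact Finset.sum_congr rfl fun lam _ => Finset.sum_congr rfl fun ν _ => by
        rw [hupsym β α]
    have r3 : (∑ lam, ∑ ν, (δ - q α - q ν + q lam) • (c β lam ν * c α ν lam)) = Bba := by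
      rw [hBbadef]
    rw [r1, r2, r3]
  -- sum of the B-terms
  have hP : (∑ lam, ∑ ν, c β lam ν * c α ν lam) = X := by
    calc (∑ lam, ∑ ν, c β lam ν * c α ν lam)
        = ∑ lam, ∑ ν, c β ν lam * c α lam ν := by rw [Finset.sum_comm]
      _ = ∑ lam, ∑ ν, c lam ν lam * c α β ν := by
          refine Finset.sum_congr rfl fun lam _ => ?_
          rw [← hassoc' α β lam lam]
          exact Finset.sum_congr rfl fun ν _ => mul_comm _ _
      _ = ∑ ν, ∑ lam, c lam ν lam * c α β ν := by rw [Finset.sum_comm]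
      _ = X := by
          rw [hXdef]
          exact Finset.sum_congr rfl fun ν _ => (Finset.sum_mul _ _ _).symm
  have hBab' : Bab = ∑ lam, ∑ ν, (δ - q β - q lam + q ν) • (c α ν lam * c β lam ν) := by
    rw [hBabdef]; rw [Finset.sum_comm]
  have hB : Bab + Bba = (2*δ - q α - q β) • X := by
    rw [← hP, hBab', hBbadef, Finset.smul_sum, ← Finset.sum_add_distrib]
    refine Finset.sum_congr rfl fun lam _ => ?_
    rw [Finset.smul_sum, ← Finset.sum_add_distrib]
    refine Finset.sum_congr rfl fun ν _ => ?_
    rw [mul_comm (c α ν lam), ← add_smul]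
    congr 1
    ring
  -- final assembly
  rw [hLHS1, h1, h3, h4, hT1, hT2, hμ α, hμ β]
  have hfin : (((δ • X - Y) + A) - Bab) + (((δ • X - Y) + A) - Bba)
      = ((δ • X - Y) + A) + ((δ • X - Y) + A) - ((2*δ - q α - q β) • X) := by
    rw [← hB]; abel
  rw [hfin]
  match_scalars <;> ring
end

section
/- Under the same hypotheses (homogeneous Frobenius structure constants $c^{\alpha\beta}_\gamma$ from a potential with WDVV associativity, homogeneity $e^\lambda c^{\alpha\beta}_{\lambda\gamma}=(\delta-q_\alpha-q_\beta+q_\gamma)c^{\alpha\beta}_\gamma$, $g^{\alpha\beta}=e^\gamma c^{\alpha\beta}_\gamma$, $\mu_\alpha=q_\alpha-\delta/2$, $\mu_\nu c^{\nu\mu}_\nu=0$), the following identity of functions of $u^1,\dots,u^N$ holds for all indices $\alpha,\beta,\gamma$: $\frac{1}{8}\partial_\gamma\Big(\partial_\nu(g^{\mu\nu}c^{\alpha\beta}_\mu)+\tfrac{1}{2}c^{\mu\nu}_\nu c^{\alpha\beta}_\mu\Big)+\frac{1}{24}\big(\tfrac{3}{2}-\mu_\beta\big)c^{\alpha\nu}_\gamma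 c^{\beta\mu}_{\nu\mu}-\frac{1}{24}\big(\tfrac{3}{2}-\mu_\alpha\big)c^{\beta\nu}_\gamma c^{\alpha\mu}_{\nu\mu} = \frac{2-\mu_\alpha-\mu_\beta}{24}\big(c^{\beta\theta}_{\theta\xi}c^{\alpha\xi}_\gamma - c^{\alpha\theta}_{\theta\xi}c^{\beta\xi}_\gamma\big)+\frac{\frac{9}{2}-\mu_\alpha-2\mu_\beta}{24}\partial_\gamma\big(c^{\theta\xi}_\theta c^{\alpha\beta}_\xi\big)+\frac{1}{24}\Big[2\partial_\gamma\big(c^{\alpha\lambda}_{\nu\lambda}g^{\nu\beta}\big)+\big(\tfrac{1}{2}-\mu_\beta\big)c^{\alpha\lambda}_{\nu\lambda}c^{\nu\beta}_\gamma+g^{\alpha\nu}c^{\beta\lambda}_{\gamma\nu\lambda}+\big(\tfrac{1}{2}-\mu_\nu\big)c^{\alpha\nu}_\gamma c^{\beta\lambda}_{\nu\lambda}\Big]$, where $c^{\alpha\beta}_{\gamma\delta\theta}:=\partial_\theta\partial_\delta c^{\alpha\beta}_\gamma$. -/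
open scoped BigOperators

set_option maxHeartbeats 4000000 in
/-- Equality of the `∂_x^2` coefficients of the genus-one parts of the second
DZ and DR Poisson operators, for a homogeneous Dubrovin–Frobenius manifold
(Einstein summation; `c a b g` denotes `c^{ab}_g`, `c^{αβ}_{γδ}=∂_δ c^{αβ}_γ`,
`c^{αβ}_{γδθ}=∂_θ ∂_δ c^{αβ}_γ`). -/
theorem dx2_coefficient_identity (N : ℕ) (R : Type*) [CommRing R] [Algebra ℂ R]
    (D : Fin N → Derivation ℂ R R)
    (hcomm : ∀ a b : Fin N, ∀ x : R, D a (D b x) = D b (D a x))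
    (u : Fin N → R) (hu : ∀ a b : Fin N, D a (u b) = if a = b then 1 else 0)
    (q r : Fin N → ℂ) (δ : ℂ)
    (c : Fin N → Fin N → Fin N → R)
    (hupsym : ∀ α β γ : Fin N, c α β γ = c β α γ)
    (hpot : ∀ α β γ δ' : Fin N, D δ' (c α β γ) = D γ (c α β δ'))
    (hassoc : ∀ α β γ m : Fin N,
      (∑ ν, c α ν m * c β γ ν) = ∑ ν, c β ν m * c α γ ν)
    (e : Fin N → R)
    (he : ∀ γ : Fin N, e γ = (1 - q γ) • u γ + algebraMap ℂ R (r γ))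
    (hhom : ∀ α β γ : Fin N,
      (∑ lam, e lam * D γ (c α β lam)) = (δ - q α - q β + q γ) • c α β γ)
    (μ : Fin N → ℂ) (hμ : ∀ α : Fin N, μ α = q α - δ / 2)
    (hmucontr : ∀ m : Fin N, (∑ ν, μ ν • c ν m ν) = 0)
    (g : Fin N → Fin N → R)
    (hg : ∀ α β : Fin N, g α β = ∑ γ, e γ * c α β γ)
    (α β γ : Fin N) :
    (1/8 : ℂ) • D γ ((∑ m, ∑ ν, D ν (g m ν * c α β m))
        + (1/2 : ℂ) • ∑ m, ∑ ν, c m ν ν * c α β m)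
      + ((3/2 - μ β)/24) • (∑ ν, ∑ m, c α ν γ * D m (c β m ν))
      - ((3/2 - μ α)/24) • (∑ ν, ∑ m, c β ν γ * D m (c α m ν))
    = ((2 - μ α - μ β)/24) • ((∑ θ, ∑ ξ, D ξ (c β θ θ) * c α ξ γ)
          - ∑ θ, ∑ ξ, D ξ (c α θ θ) * c β ξ γ)
      + ((9/2 - μ α - 2*μ β)/24) • D γ (∑ θ, ∑ ξ, c θ ξ θ * c α β ξ)
      + (1/24 : ℂ) • ((2 : ℂ) • D γ (∑ ν, ∑ lam, D lam (c α lam ν) * g ν β)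
          + (1/2 - μ β) • (∑ ν, ∑ lam, D lam (c α lam ν) * c ν β γ)
          + (∑ ν, ∑ lam, g α ν * D lam (D ν (c β lam γ)))
          + ∑ ν, ∑ lam, (1/2 - μ ν) • (c α ν γ * D lam (c β lam ν))) := by
  -- ===================== basic tools =====================
  have hDsum : ∀ (a : Fin N) (f : Fin N → R),
      D a (∑ x, f x) = ∑ x, D a (f x) := fun a f => map_sum (D a) f Finset.univ
  have hleib : ∀ (a : Fin N) (x y : R), D a (x * y) = x * D a y + y * D a x := by
    intro a x y; rw [Derivation.leibniz]; simp [smul_eq_mul]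
  have hde : ∀ (x l : Fin N), D x (e l) = (1 - q l) • (if x = l then (1 : R) else 0) := by
    intro x l
    rw [he l, map_add, Derivation.map_smul, Derivation.map_algebraMap, hu x l, add_zero]
  have hsumdE : ∀ (x : Fin N) (f : Fin N → R),
      (∑ l, D x (e l) * f l) = (1 - q x) • f x := by
    intro x f
    have h1 : ∀ l : Fin N, D x (e l) * f l = if x = l then (1 - q l) • f l else 0 := by
      intro l
      rw [hde x l]
      by_cases h : x = l
      · simp [h, smul_mul_assoc]
      · simp [h]
    rw [Finset.sum_congr rfl fun l _ => h1 l, Finset.sum_ite_eq]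
    simp
  have L1 : ∀ (a m : Fin N), (∑ x, D x (c a x m)) = D m (∑ x, c a x x) := by
    intro a m
    rw [hDsum m]
    exact Finset.sum_congr rfl fun x _ => hpot a x m x
  have Hsum2 : ∀ (b m : Fin N),
      (∑ x, D x (D γ (c b x m))) = D γ (D m (∑ x, c b x x)) := by
    intro b m
    have h := congrArg (D γ) (L1 b m)
    rw [hDsum γ] at h
    rw [← h]
    exact Finset.sum_congr rfl fun x _ => (hcomm γ x (c b x m)).symm
  have gsym : ∀ a b : Fin N, g a b = g b a := by
    intro a b; rw [hg, hg]
    exact Finset.sum_congr rfl fun l _ => by rw [hupsym]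
  have dg : ∀ (x a b : Fin N), D x (g a b) = (1 - μ a - μ b) • c a b x := by
    intro x a b
    rw [hg a b, hDsum x, Finset.sum_congr rfl fun l _ => hleib x (e l) (c a b l),
      Finset.sum_add_distrib]
    have h2 : (∑ l, c a b l * D x (e l)) = (1 - q x) • c a b x := by
      rw [Finset.sum_congr rfl fun l _ => mul_comm (c a b l) (D x (e l))]
      exact hsumdE x _
    rw [hhom a b x, h2, hμ a, hμ b]
    module
  have euler2 : ∀ (a b g' d : Fin N),
      (∑ l, e l * D l (D d (c a b g'))) = (δ - q a - q b + q g' + q d - 1) • D d (c a b g') := by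
    intro a b g' d
    have e1 : (∑ l, e l * D l (c a b g')) = (δ - q a - q b + q g') • c a b g' := by
      rw [Finset.sum_congr rfl fun l _ => by rw [hpot a b g' l]]
      exact hhom a b g'
    have h := congrArg (D d) e1
    rw [hDsum d, Finset.sum_congr rfl fun l _ => hleib d (e l) (D l (c a b g')),
      Finset.sum_add_distrib, Derivation.map_smul] at h
    have h2 : (∑ l, D l (c a b g') * D d (e l)) = (1 - q d) • D d (c a b g') := by
      rw [Finset.sum_congr rfl fun l _ => mul_comm (D l (c a b g')) (D d (e l))]
      exact hsumdE d _
    rw [h2, Finset.sum_congr rfl fun l _ => by rw [hcomm d l (c a b g')]] at h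
    linear_combination (norm := module) h
  have gAssoc : ∀ (a b ν : Fin N),
      (∑ m, g m ν * c a b m) = ∑ m, g a m * c b ν m := by
    intro a b ν
    calc (∑ m, g m ν * c a b m) = ∑ m, ∑ l, e l * (c m ν l * c a b m) := by
          refine Finset.sum_congr rfl fun m _ => ?_
          rw [hg m ν, Finset.sum_mul]
          exact Finset.sum_congr rfl fun l _ => mul_assoc _ _ _
      _ = ∑ l, ∑ m, e l * (c m ν l * c a b m) := Finset.sum_comm
      _ = ∑ l, e l * ∑ m, c m ν l * c a b m := by
          refine Finset.sum_congr rfl fun l _ => ?_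
          rw [Finset.mul_sum]
      _ = ∑ l, e l * ∑ m, c a m l * c b ν m := by
          refine Finset.sum_congr rfl fun l _ => ?_
          congr 1
          calc (∑ m, c m ν l * c a b m) = ∑ m, c ν m l * c a b m :=
                Finset.sum_congr rfl fun m _ => by rw [hupsym m ν]
            _ = ∑ m, c a m l * c ν b m := hassoc ν a b l
            _ = ∑ m, c a m l * c b ν m :=
                Finset.sum_congr rfl fun m _ => by rw [hupsym ν b]
      _ = ∑ m, ∑ l, e l * (c a m l * c b ν m) := by
          rw [Finset.sum_comm]
          exact Finset.sum_congr rfl fun l _ => by rw [Finset.mul_sum]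
      _ = ∑ m, g a m * c b ν m := by
          refine Finset.sum_congr rfl fun m _ => ?_
          rw [hg a m, Finset.sum_mul]
          exact Finset.sum_congr rfl fun l _ => (mul_assoc _ _ _).symm
  -- ===================== Bμ = 0 and Bν = 0 =====================
  have HBmu : (∑ m, ∑ x, μ m • (c α m x * c β x m)) = 0 := by
    have tr1 : ∀ m : Fin N, (∑ x, c α m x * c β x m) = ∑ x, c m x m * c α β x := by
      intro m
      calc (∑ x, c α m x * c β x m) = ∑ x, c β x m * c m α x := by
            refine Finset.sum_congr rfl fun x _ => ?_
            rw [mul_comm, hupsym m α]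
        _ = ∑ x, c m x m * c β α x := hassoc β m α m
        _ = ∑ x, c m x m * c α β x :=
            Finset.sum_congr rfl fun x _ => by rw [hupsym β α]
    calc (∑ m, ∑ x, μ m • (c α m x * c β x m))
        = ∑ m, μ m • ∑ x, (c α m x * c β x m) := by
          exact Finset.sum_congr rfl fun m _ => (Finset.smul_sum).symm
      _ = ∑ m, ∑ x, (μ m • c m x m) * c α β x := by
          refine Finset.sum_congr rfl fun m _ => ?_
          rw [tr1 m, Finset.smul_sum]
          exact Finset.sum_congr rfl fun x _ => (smul_mul_assoc _ _ _).symm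
      _ = ∑ x, (∑ m, μ m • c m x m) * c α β x := by
          rw [Finset.sum_comm]
          exact Finset.sum_congr rfl fun x _ => (Finset.sum_mul _ _ _).symm
      _ = 0 := by
          rw [Finset.sum_congr rfl fun x _ => by rw [hmucontr x]]
          simp
  have HBnu : (∑ m, ∑ x, μ x • (c α m x * c β x m)) = 0 := by
    have tr2 : ∀ x : Fin N, (∑ m, c α m x * c β x m) = ∑ m, c x m x * c α β m := by
      intro x
      calc (∑ m, c α m x * c β x m) = ∑ m, c α m x * c x β m :=
            Finset.sum_congr rfl fun m _ => by rw [hupsym β x]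
        _ = ∑ m, c x m x * c α β m := hassoc α x β x
    calc (∑ m, ∑ x, μ x • (c α m x * c β x m))
        = ∑ x, ∑ m, μ x • (c α m x * c β x m) := Finset.sum_comm
      _ = ∑ x, μ x • ∑ m, (c α m x * c β x m) := by
          exact Finset.sum_congr rfl fun x _ => (Finset.smul_sum).symm
      _ = ∑ x, ∑ m, (μ x • c x m x) * c α β m := by
          refine Finset.sum_congr rfl fun x _ => ?_
          rw [tr2 x, Finset.smul_sum]
          exact Finset.sum_congr rfl fun m _ => (smul_mul_assoc _ _ _).symm
      _ = ∑ m, (∑ x, μ x • c x m x) * c α β m := by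
          rw [Finset.sum_comm]
          exact Finset.sum_congr rfl fun m _ => (Finset.sum_mul _ _ _).symm
      _ = 0 := by
          rw [Finset.sum_congr rfl fun m _ => by rw [hmucontr m]]
          simp
  have hXY : (∑ m, ∑ x, μ m • (c α m x * D γ (c β x m)))
      + (∑ m, ∑ x, μ m • (c β x m * D γ (c α m x))) = 0 := by
    have h := congrArg (D γ) HBmu
    rw [map_zero, hDsum γ] at h
    rw [← h]
    rw [Finset.sum_congr rfl fun m _ => hDsum γ _]
    rw [← Finset.sum_add_distrib]
    refine Finset.sum_congr rfl fun m _ => ?_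
    rw [← Finset.sum_add_distrib]
    refine Finset.sum_congr rfl fun x _ => ?_
    rw [Derivation.map_smul, hleib γ, smul_add]
  have hXxYx : (∑ m, ∑ x, μ x • (c α m x * D γ (c β x m)))
      + (∑ m, ∑ x, μ x • (c β x m * D γ (c α m x))) = 0 := by
    have h := congrArg (D γ) HBnu
    rw [map_zero, hDsum γ] at h
    rw [← h]
    rw [Finset.sum_congr rfl fun m _ => hDsum γ _]
    rw [← Finset.sum_add_distrib]
    refine Finset.sum_congr rfl fun m _ => ?_
    rw [← Finset.sum_add_distrib]
    refine Finset.sum_congr rfl fun x _ => ?_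
    rw [Derivation.map_smul, hleib γ, smul_add]
  have HBmuD : D γ (∑ m, ∑ x, μ m • (c α m x * c β x m)) = 0 := by
    rw [HBmu, map_zero]
  -- ===================== S = B and friends =====================
  have HSt : (∑ m, (∑ x, c m x x) * c α β m) = ∑ m, ∑ x, c α m x * c β x m := by
    calc (∑ m, (∑ x, c m x x) * c α β m) = ∑ m, (∑ x, c x m x) * c α β m := by
          refine Finset.sum_congr rfl fun m _ => ?_
          rw [Finset.sum_congr rfl fun x _ => hupsym m x x]
      _ = ∑ m, ∑ x, c x m x * c α β m := by
          exact Finset.sum_congr rfl fun m _ => Finset.sum_mul _ _ _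
      _ = ∑ x, ∑ m, c x m x * c α β m := Finset.sum_comm
      _ = ∑ x, ∑ m, c α m x * c x β m := by
          exact Finset.sum_congr rfl fun x _ => hassoc x α β x
      _ = ∑ x, ∑ m, c α m x * c β x m := by
          refine Finset.sum_congr rfl fun x _ => Finset.sum_congr rfl fun m _ => ?_
          rw [hupsym x β]
      _ = ∑ m, ∑ x, c α m x * c β x m := Finset.sum_comm
  have HS1 : (∑ m, ∑ ν, c m ν ν * c α β m) = (∑ m, ∑ x, c α m x * c β x m) := by
    rw [← HSt]
    exact Finset.sum_congr rfl fun m _ => (Finset.sum_mul _ _ _).symm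
  have HS2 : (∑ θ, ∑ ξ, c θ ξ θ * c α β ξ) = (∑ m, ∑ x, c α m x * c β x m) := by
    calc (∑ θ, ∑ ξ, c θ ξ θ * c α β ξ) = ∑ ξ, ∑ θ, c θ ξ θ * c α β ξ := Finset.sum_comm
      _ = ∑ ξ, (∑ θ, c ξ θ θ) * c α β ξ := by
          refine Finset.sum_congr rfl fun ξ _ => ?_
          rw [Finset.sum_mul]
          exact Finset.sum_congr rfl fun θ _ => by rw [hupsym θ ξ]
      _ = ∑ m, ∑ x, c α m x * c β x m := HSt
  have HDB : D γ (∑ m, ∑ x, c α m x * c β x m)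
      = (∑ m, ∑ x, c α m x * D γ (c β x m)) + (∑ m, ∑ x, c β x m * D γ (c α m x)) := by
    rw [hDsum γ, Finset.sum_congr rfl fun m _ => hDsum γ _, ← Finset.sum_add_distrib]
    refine Finset.sum_congr rfl fun m _ => ?_
    rw [← Finset.sum_add_distrib]
    exact Finset.sum_congr rfl fun x _ => hleib γ _ _
  -- ===================== D γ of W-type sums =====================
  have HDW : ∀ a b : Fin N, D γ (∑ m, g a m * D m (∑ x, c b x x))
      = (((1 - μ a) • (∑ m, c a m γ * D m (∑ x, c b x x))
          - (∑ m, μ m • (c a m γ * D m (∑ x, c b x x))))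
        + (∑ m, g a m * D γ (D m (∑ x, c b x x)))) := by
    intro a b
    rw [hDsum γ]
    rw [Finset.sum_congr rfl fun m _ => hleib γ (g a m) (D m (∑ x, c b x x))]
    rw [Finset.sum_add_distrib, add_comm]
    congr 1
    calc (∑ m, D m (∑ x, c b x x) * D γ (g a m))
        = ∑ m, ((1 - μ a) • (c a m γ * D m (∑ x, c b x x))
            - μ m • (c a m γ * D m (∑ x, c b x x))) := by
          refine Finset.sum_congr rfl fun m _ => ?_
          rw [dg γ a m, mul_smul_comm, mul_comm (D m (∑ x, c b x x)) (c a m γ)]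
          module
      _ = (1 - μ a) • (∑ m, c a m γ * D m (∑ x, c b x x))
            - (∑ m, μ m • (c a m γ * D m (∑ x, c b x x))) := by
          rw [Finset.sum_sub_distrib, ← Finset.smul_sum]
  -- ===================== HLin =====================
  have HLin : (∑ m, ∑ ν, D ν (g m ν * c α β m))
      = ((1 - μ α) • (∑ m, ∑ x, c α m x * c β x m)
          - (∑ m, ∑ x, μ m • (c α m x * c β x m)))
        + ∑ m, g α m * D m (∑ x, c β x x) := by
    calc (∑ m, ∑ ν, D ν (g m ν * c α β m)) = ∑ ν, ∑ m, D ν (g m ν * c α β m) :=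
          Finset.sum_comm
      _ = ∑ ν, D ν (∑ m, g m ν * c α β m) := by
          exact Finset.sum_congr rfl fun ν _ => (hDsum ν _).symm
      _ = ∑ ν, D ν (∑ m, g α m * c β ν m) := by
          exact Finset.sum_congr rfl fun ν _ => congrArg (D ν) (gAssoc α β ν)
      _ = ∑ ν, ∑ m, (g α m * D ν (c β ν m) + c β ν m * D ν (g α m)) := by
          refine Finset.sum_congr rfl fun ν _ => ?_
          rw [hDsum ν]
          exact Finset.sum_congr rfl fun m _ => hleib ν _ _
      _ = (∑ ν, ∑ m, g α m * D ν (c β ν m))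
          + ∑ ν, ∑ m, c β ν m * D ν (g α m) := by
          rw [← Finset.sum_add_distrib]
          exact Finset.sum_congr rfl fun ν _ => Finset.sum_add_distrib
      _ = ((1 - μ α) • (∑ m, ∑ x, c α m x * c β x m)
            - (∑ m, ∑ x, μ m • (c α m x * c β x m)))
          + ∑ m, g α m * D m (∑ x, c β x x) := by
          have hA : (∑ ν, ∑ m, g α m * D ν (c β ν m))
              = ∑ m, g α m * D m (∑ x, c β x x) := by
            rw [Finset.sum_comm]
            refine Finset.sum_congr rfl fun m _ => ?_
            rw [← Finset.mul_sum, L1 β m]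
          have hB : (∑ ν, ∑ m, c β ν m * D ν (g α m))
              = (1 - μ α) • (∑ m, ∑ x, c α m x * c β x m)
                - (∑ m, ∑ x, μ m • (c α m x * c β x m)) := by
            calc (∑ ν, ∑ m, c β ν m * D ν (g α m))
                = ∑ ν, ∑ m, ((1 - μ α) • (c α m ν * c β ν m)
                    - μ m • (c α m ν * c β ν m)) := by
                  refine Finset.sum_congr rfl fun ν _ => Finset.sum_congr rfl fun m _ => ?_
                  rw [dg ν α m, mul_smul_comm, mul_comm (c β ν m) (c α m ν)]
                  module
              _ = (∑ ν, ∑ m, (1 - μ α) • (c α m ν * c β ν m))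
                  - ∑ ν, ∑ m, μ m • (c α m ν * c β ν m) := by
                  simp only [Finset.sum_sub_distrib]
              _ = (∑ m, ∑ ν, (1 - μ α) • (c α m ν * c β ν m))
                  - ∑ m, ∑ ν, μ m • (c α m ν * c β ν m) := by
                  rw [Finset.sum_comm (f := fun ν m => (1 - μ α) • (c α m ν * c β ν m)),
                    Finset.sum_comm (f := fun ν m => μ m • (c α m ν * c β ν m))]
              _ = (1 - μ α) • (∑ m, ∑ x, c α m x * c β x m)
                  - ∑ m, ∑ x, μ m • (c α m x * c β x m) := by
                  simp only [← Finset.smul_sum]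
          rw [hA, hB, add_comm]
  -- ===================== simple goal-side conversions =====================
  have HLP : (∑ ν, ∑ m, c α ν γ * D m (c β m ν)) = ∑ m, c α m γ * D m (∑ x, c β x x) := by
    refine Finset.sum_congr rfl fun ν _ => ?_
    rw [← Finset.mul_sum]
    congr 1
    calc (∑ m, D m (c β m ν)) = ∑ m, D ν (c β m m) :=
          Finset.sum_congr rfl fun m _ => hpot β m ν m
      _ = D ν (∑ x, c β x x) := (hDsum ν _).symm
  have HLPp : (∑ ν, ∑ m, c β ν γ * D m (c α m ν)) = ∑ m, c β m γ * D m (∑ x, c α x x) := by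
    refine Finset.sum_congr rfl fun ν _ => ?_
    rw [← Finset.mul_sum]
    congr 1
    calc (∑ m, D m (c α m ν)) = ∑ m, D ν (c α m m) :=
          Finset.sum_congr rfl fun m _ => hpot α m ν m
      _ = D ν (∑ x, c α x x) := (hDsum ν _).symm
  have HRP : (∑ θ, ∑ ξ, D ξ (c β θ θ) * c α ξ γ) = ∑ m, c α m γ * D m (∑ x, c β x x) := by
    calc (∑ θ, ∑ ξ, D ξ (c β θ θ) * c α ξ γ) = ∑ ξ, ∑ θ, D ξ (c β θ θ) * c α ξ γ :=
          Finset.sum_comm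
      _ = ∑ ξ, c α ξ γ * D ξ (∑ x, c β x x) := by
          refine Finset.sum_congr rfl fun ξ _ => ?_
          rw [← Finset.sum_mul, mul_comm, hDsum ξ]
  have HRPp : (∑ θ, ∑ ξ, D ξ (c α θ θ) * c β ξ γ) = ∑ m, c β m γ * D m (∑ x, c α x x) := by
    calc (∑ θ, ∑ ξ, D ξ (c α θ θ) * c β ξ γ) = ∑ ξ, ∑ θ, D ξ (c α θ θ) * c β ξ γ :=
          Finset.sum_comm
      _ = ∑ ξ, c β ξ γ * D ξ (∑ x, c α x x) := by
          refine Finset.sum_congr rfl fun ξ _ => ?_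
          rw [← Finset.sum_mul, mul_comm, hDsum ξ]
  have HWpre : (∑ ν, ∑ lam, D lam (c α lam ν) * g ν β) = ∑ m, g β m * D m (∑ x, c α x x) := by
    refine Finset.sum_congr rfl fun ν _ => ?_
    rw [← Finset.sum_mul, L1 α ν, mul_comm, gsym ν β]
  have HR5 : (∑ ν, ∑ lam, D lam (c α lam ν) * c ν β γ) = ∑ m, c β m γ * D m (∑ x, c α x x) := by
    refine Finset.sum_congr rfl fun ν _ => ?_
    rw [← Finset.sum_mul, L1 α ν, mul_comm, hupsym ν β]
  have HR6 : (∑ ν, ∑ lam, g α ν * D lam (D ν (c β lam γ)))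
      = ∑ m, g α m * D γ (D m (∑ x, c β x x)) := by
    refine Finset.sum_congr rfl fun ν _ => ?_
    rw [← Finset.mul_sum]
    congr 1
    calc (∑ lam, D lam (D ν (c β lam γ))) = ∑ lam, D lam (D γ (c β lam ν)) := by
          refine Finset.sum_congr rfl fun lam _ => ?_
          rw [hpot β lam γ ν]
      _ = D γ (D ν (∑ x, c β x x)) := by
          rw [Finset.sum_congr rfl fun lam _ => hcomm lam γ (c β lam ν), ← hDsum γ,
            L1 β ν]
  have HR7 : (∑ ν, ∑ lam, (1/2 - μ ν) • (c α ν γ * D lam (c β lam ν)))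
      = (1/2 : ℂ) • (∑ m, c α m γ * D m (∑ x, c β x x))
        - ∑ m, μ m • (c α m γ * D m (∑ x, c β x x)) := by
    calc (∑ ν, ∑ lam, (1/2 - μ ν) • (c α ν γ * D lam (c β lam ν)))
        = ∑ ν, (1/2 - μ ν) • (c α ν γ * D ν (∑ x, c β x x)) := by
          refine Finset.sum_congr rfl fun ν _ => ?_
          rw [← Finset.smul_sum, ← Finset.mul_sum]
          congr 2
          calc (∑ lam, D lam (c β lam ν)) = ∑ lam, D ν (c β lam lam) :=
                Finset.sum_congr rfl fun lam _ => hpot β lam ν lam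
            _ = D ν (∑ x, c β x x) := (hDsum ν _).symm
      _ = ∑ ν, ((1/2 : ℂ) • (c α ν γ * D ν (∑ x, c β x x))
            - μ ν • (c α ν γ * D ν (∑ x, c β x x))) := by
          exact Finset.sum_congr rfl fun ν _ => sub_smul _ _ _
      _ = (1/2 : ℂ) • (∑ m, c α m γ * D m (∑ x, c β x x))
            - ∑ m, μ m • (c α m γ * D m (∑ x, c β x x)) := by
          rw [Finset.sum_sub_distrib, ← Finset.smul_sum]
  -- ===================== Rel1 =====================
  have Rel1 : (∑ m, ∑ x, c β x m * D γ (c α m x)) + (∑ m, c α m γ * D m (∑ x, c β x x))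
      = (∑ m, ∑ x, c α m x * D γ (c β x m)) + (∑ m, c β m γ * D m (∑ x, c α x x)) := by
    have h0 : (∑ x, D x (∑ m, c α m γ * c β x m)) = ∑ x, D x (∑ m, c β m γ * c α x m) :=
      Finset.sum_congr rfl fun x _ => congrArg (D x) (hassoc α β x γ)
    have hL : (∑ x, D x (∑ m, c α m γ * c β x m))
        = (∑ m, c α m γ * D m (∑ x, c β x x)) + (∑ m, ∑ x, c β x m * D γ (c α m x)) := by
      calc (∑ x, D x (∑ m, c α m γ * c β x m))
          = ∑ x, ∑ m, (c α m γ * D x (c β x m) + c β x m * D x (c α m γ)) := by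
            refine Finset.sum_congr rfl fun x _ => ?_
            rw [hDsum x]
            exact Finset.sum_congr rfl fun m _ => hleib x _ _
        _ = (∑ x, ∑ m, c α m γ * D x (c β x m)) + ∑ x, ∑ m, c β x m * D x (c α m γ) := by
            rw [← Finset.sum_add_distrib]
            exact Finset.sum_congr rfl fun x _ => Finset.sum_add_distrib
        _ = (∑ m, c α m γ * D m (∑ x, c β x x)) + (∑ m, ∑ x, c β x m * D γ (c α m x)) := by
            congr 1
            · rw [Finset.sum_comm]
              refine Finset.sum_congr rfl fun m _ => ?_
              rw [← Finset.mul_sum, L1 β m]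
            · rw [Finset.sum_comm]
              refine Finset.sum_congr rfl fun m _ => Finset.sum_congr rfl fun x _ => ?_
              rw [hpot α m γ x]
    have hR : (∑ x, D x (∑ m, c β m γ * c α x m))
        = (∑ m, c β m γ * D m (∑ x, c α x x)) + (∑ m, ∑ x, c α m x * D γ (c β x m)) := by
      calc (∑ x, D x (∑ m, c β m γ * c α x m))
          = ∑ x, ∑ m, (c β m γ * D x (c α x m) + c α x m * D x (c β m γ)) := by
            refine Finset.sum_congr rfl fun x _ => ?_
            rw [hDsum x]
            exact Finset.sum_congr rfl fun m _ => hleib x _ _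
        _ = (∑ x, ∑ m, c β m γ * D x (c α x m)) + ∑ x, ∑ m, c α x m * D x (c β m γ) := by
            rw [← Finset.sum_add_distrib]
            exact Finset.sum_congr rfl fun x _ => Finset.sum_add_distrib
        _ = (∑ m, c β m γ * D m (∑ x, c α x x)) + (∑ m, ∑ x, c α m x * D γ (c β x m)) := by
            congr 1
            · rw [Finset.sum_comm]
              refine Finset.sum_congr rfl fun m _ => ?_
              rw [← Finset.mul_sum, L1 α m]
            · refine Finset.sum_congr rfl fun x _ => Finset.sum_congr rfl fun m _ => ?_
              rw [hpot β m γ x]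
    rw [hL, hR] at h0
    calc (∑ m, ∑ x, c β x m * D γ (c α m x)) + (∑ m, c α m γ * D m (∑ x, c β x x))
        = (∑ m, c α m γ * D m (∑ x, c β x x)) + (∑ m, ∑ x, c β x m * D γ (c α m x)) :=
          add_comm _ _
      _ = (∑ m, c β m γ * D m (∑ x, c α x x)) + (∑ m, ∑ x, c α m x * D γ (c β x m)) := h0
      _ = (∑ m, ∑ x, c α m x * D γ (c β x m)) + (∑ m, c β m γ * D m (∑ x, c α x x)) :=
          add_comm _ _
  -- ===================== the e-mediated associativity relation =====================
  have ev3 : ∀ (a m x : Fin N), (∑ l, e l * D x (D γ (c a m l)))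
      = (δ - q a - q m + q γ + q x - 1) • D γ (c a m x) := by
    intro a m x
    calc (∑ l, e l * D x (D γ (c a m l)))
        = ∑ l, e l * D l (D x (c a m γ)) := by
          refine Finset.sum_congr rfl fun l _ => ?_
          rw [hpot a m l γ, hcomm x l]
      _ = (δ - q a - q m + q γ + q x - 1) • D x (c a m γ) := euler2 a m γ x
      _ = (δ - q a - q m + q γ + q x - 1) • D γ (c a m x) := by rw [hpot a m γ x]
  have side : ∀ a b : Fin N,
      (∑ l, e l * ∑ x, D x (D γ (∑ m, c a m l * c b x m)))
      = ((∑ m, g a m * D γ (D m (∑ x, c b x x)))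
          + (((δ/2 - μ a) • (∑ x, ∑ m, c a m x * D γ (c b x m))
              - (∑ x, ∑ m, μ m • (c a m x * D γ (c b x m))))
            + (∑ x, ∑ m, μ x • (c a m x * D γ (c b x m)))))
        + ((((δ - μ a + μ γ - 1) • (∑ x, ∑ m, c b x m * D γ (c a m x))
              - (∑ x, ∑ m, μ m • (c b x m * D γ (c a m x))))
            + (∑ x, ∑ m, μ x • (c b x m * D γ (c a m x))))
          + (((δ/2 - μ a + μ γ) • (∑ m, c a m γ * D m (∑ x, c b x x))
              - (∑ m, μ m • (c a m γ * D m (∑ x, c b x x)))))) := by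
    intro a b
    have st1 : ∀ l : Fin N, (∑ x, D x (D γ (∑ m, c a m l * c b x m)))
        = ∑ x, ∑ m, ((c a m l * D x (D γ (c b x m)) + D γ (c b x m) * D x (c a m l))
            + (c b x m * D x (D γ (c a m l)) + D γ (c a m l) * D x (c b x m))) := by
      intro l
      refine Finset.sum_congr rfl fun x _ => ?_
      rw [hDsum γ, hDsum x]
      refine Finset.sum_congr rfl fun m _ => ?_
      rw [hleib γ, map_add, hleib x, hleib x]
    have hG1 : (∑ l, ∑ x, ∑ m, e l * (c a m l * D x (D γ (c b x m))))
        = ∑ m, g a m * D γ (D m (∑ x, c b x x)) := by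
      calc (∑ l, ∑ x, ∑ m, e l * (c a m l * D x (D γ (c b x m))))
          = ∑ x, ∑ l, ∑ m, e l * (c a m l * D x (D γ (c b x m))) := Finset.sum_comm
        _ = ∑ x, ∑ m, ∑ l, e l * (c a m l * D x (D γ (c b x m))) :=
            Finset.sum_congr rfl fun x _ => Finset.sum_comm
        _ = ∑ x, ∑ m, g a m * D x (D γ (c b x m)) := by
            refine Finset.sum_congr rfl fun x _ => Finset.sum_congr rfl fun m _ => ?_
            rw [Finset.sum_congr rfl fun l _ => (mul_assoc (e l) _ _).symm,
              ← Finset.sum_mul, ← hg a m]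
        _ = ∑ m, ∑ x, g a m * D x (D γ (c b x m)) := Finset.sum_comm
        _ = ∑ m, g a m * D γ (D m (∑ x, c b x x)) := by
            refine Finset.sum_congr rfl fun m _ => ?_
            rw [← Finset.mul_sum, Hsum2 b m]
    have hG2 : (∑ l, ∑ x, ∑ m, e l * (D γ (c b x m) * D x (c a m l)))
        = ((δ/2 - μ a) • (∑ x, ∑ m, c a m x * D γ (c b x m))
            - (∑ x, ∑ m, μ m • (c a m x * D γ (c b x m))))
          + (∑ x, ∑ m, μ x • (c a m x * D γ (c b x m))) := by
      calc (∑ l, ∑ x, ∑ m, e l * (D γ (c b x m) * D x (c a m l)))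
          = ∑ x, ∑ l, ∑ m, e l * (D γ (c b x m) * D x (c a m l)) := Finset.sum_comm
        _ = ∑ x, ∑ m, ∑ l, e l * (D γ (c b x m) * D x (c a m l)) :=
            Finset.sum_congr rfl fun x _ => Finset.sum_comm
        _ = ∑ x, ∑ m, D γ (c b x m) * ((δ - q a - q m + q x) • c a m x) := by
            refine Finset.sum_congr rfl fun x _ => Finset.sum_congr rfl fun m _ => ?_
            rw [show (∑ l, e l * (D γ (c b x m) * D x (c a m l)))
                = ∑ l, D γ (c b x m) * (e l * D x (c a m l)) from
                Finset.sum_congr rfl fun l _ => by ring,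
              ← Finset.mul_sum, hhom a m x]
        _ = ∑ x, ∑ m, (((δ/2 - μ a) • (c a m x * D γ (c b x m))
              - μ m • (c a m x * D γ (c b x m))) + μ x • (c a m x * D γ (c b x m))) := by
            refine Finset.sum_congr rfl fun x _ => Finset.sum_congr rfl fun m _ => ?_
            rw [mul_smul_comm, mul_comm (D γ (c b x m)) (c a m x), hμ a, hμ m, hμ x]
            module
        _ = ((δ/2 - μ a) • (∑ x, ∑ m, c a m x * D γ (c b x m))
              - (∑ x, ∑ m, μ m • (c a m x * D γ (c b x m))))
            + (∑ x, ∑ m, μ x • (c a m x * D γ (c b x m))) := by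
            simp only [Finset.sum_add_distrib, Finset.sum_sub_distrib, ← Finset.smul_sum]
    have hG3 : (∑ l, ∑ x, ∑ m, e l * (c b x m * D x (D γ (c a m l))))
        = ((δ - μ a + μ γ - 1) • (∑ x, ∑ m, c b x m * D γ (c a m x))
            - (∑ x, ∑ m, μ m • (c b x m * D γ (c a m x))))
          + (∑ x, ∑ m, μ x • (c b x m * D γ (c a m x))) := by
      calc (∑ l, ∑ x, ∑ m, e l * (c b x m * D x (D γ (c a m l))))
          = ∑ x, ∑ l, ∑ m, e l * (c b x m * D x (D γ (c a m l))) := Finset.sum_comm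
        _ = ∑ x, ∑ m, ∑ l, e l * (c b x m * D x (D γ (c a m l))) :=
            Finset.sum_congr rfl fun x _ => Finset.sum_comm
        _ = ∑ x, ∑ m, c b x m * ((δ - q a - q m + q γ + q x - 1) • D γ (c a m x)) := by
            refine Finset.sum_congr rfl fun x _ => Finset.sum_congr rfl fun m _ => ?_
            rw [show (∑ l, e l * (c b x m * D x (D γ (c a m l))))
                = ∑ l, c b x m * (e l * D x (D γ (c a m l))) from
                Finset.sum_congr rfl fun l _ => by ring,
              ← Finset.mul_sum, ev3 a m x]
        _ = ∑ x, ∑ m, (((δ - μ a + μ γ - 1) • (c b x m * D γ (c a m x))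
              - μ m • (c b x m * D γ (c a m x))) + μ x • (c b x m * D γ (c a m x))) := by
            refine Finset.sum_congr rfl fun x _ => Finset.sum_congr rfl fun m _ => ?_
            rw [mul_smul_comm, hμ a, hμ m, hμ x, hμ γ]
            module
        _ = ((δ - μ a + μ γ - 1) • (∑ x, ∑ m, c b x m * D γ (c a m x))
              - (∑ x, ∑ m, μ m • (c b x m * D γ (c a m x))))
            + (∑ x, ∑ m, μ x • (c b x m * D γ (c a m x))) := by
            simp only [Finset.sum_add_distrib, Finset.sum_sub_distrib, ← Finset.smul_sum]
    have hG4 : (∑ l, ∑ x, ∑ m, e l * (D γ (c a m l) * D x (c b x m)))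
        = (δ/2 - μ a + μ γ) • (∑ m, c a m γ * D m (∑ x, c b x x))
          - (∑ m, μ m • (c a m γ * D m (∑ x, c b x x))) := by
      calc (∑ l, ∑ x, ∑ m, e l * (D γ (c a m l) * D x (c b x m)))
          = ∑ x, ∑ l, ∑ m, e l * (D γ (c a m l) * D x (c b x m)) := Finset.sum_comm
        _ = ∑ x, ∑ m, ∑ l, e l * (D γ (c a m l) * D x (c b x m)) :=
            Finset.sum_congr rfl fun x _ => Finset.sum_comm
        _ = ∑ x, ∑ m, (δ - q a - q m + q γ) • (c a m γ * D x (c b x m)) := by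
            refine Finset.sum_congr rfl fun x _ => Finset.sum_congr rfl fun m _ => ?_
            rw [Finset.sum_congr rfl fun l _ => (mul_assoc (e l) _ _).symm,
              ← Finset.sum_mul, hhom a m γ, smul_mul_assoc]
        _ = ∑ m, ∑ x, (δ - q a - q m + q γ) • (c a m γ * D x (c b x m)) := Finset.sum_comm
        _ = ∑ m, (δ - q a - q m + q γ) • (c a m γ * D m (∑ x, c b x x)) := by
            refine Finset.sum_congr rfl fun m _ => ?_
            rw [← Finset.smul_sum, ← Finset.mul_sum, L1 b m]
        _ = ∑ m, ((δ/2 - μ a + μ γ) • (c a m γ * D m (∑ x, c b x x))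
              - μ m • (c a m γ * D m (∑ x, c b x x))) := by
            refine Finset.sum_congr rfl fun m _ => ?_
            rw [hμ a, hμ m, hμ γ]
            module
        _ = (δ/2 - μ a + μ γ) • (∑ m, c a m γ * D m (∑ x, c b x x))
            - (∑ m, μ m • (c a m γ * D m (∑ x, c b x x))) := by
            simp only [Finset.sum_sub_distrib, ← Finset.smul_sum]
    calc (∑ l, e l * ∑ x, D x (D γ (∑ m, c a m l * c b x m)))
        = ∑ l, ∑ x, ∑ m, ((e l * (c a m l * D x (D γ (c b x m)))
              + e l * (D γ (c b x m) * D x (c a m l)))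
            + (e l * (c b x m * D x (D γ (c a m l)))
              + e l * (D γ (c a m l) * D x (c b x m)))) := by
          refine Finset.sum_congr rfl fun l _ => ?_
          rw [st1 l, Finset.mul_sum]
          refine Finset.sum_congr rfl fun x _ => ?_
          rw [Finset.mul_sum]
          refine Finset.sum_congr rfl fun m _ => ?_
          rw [mul_add, mul_add, mul_add]
      _ = ((∑ l, ∑ x, ∑ m, e l * (c a m l * D x (D γ (c b x m))))
            + ∑ l, ∑ x, ∑ m, e l * (D γ (c b x m) * D x (c a m l)))
          + ((∑ l, ∑ x, ∑ m, e l * (c b x m * D x (D γ (c a m l))))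
            + ∑ l, ∑ x, ∑ m, e l * (D γ (c a m l) * D x (c b x m))) := by
          simp only [Finset.sum_add_distrib]
      _ = _ := by rw [hG1, hG2, hG3, hG4]
  have HHassoc : (∑ l, e l * ∑ x, D x (D γ (∑ m, c α m l * c β x m)))
      = ∑ l, e l * ∑ x, D x (D γ (∑ m, c β m l * c α x m)) := by
    refine Finset.sum_congr rfl fun l _ => ?_
    congr 1
    exact Finset.sum_congr rfl fun x _ =>
      congrArg (D x) (congrArg (D γ) (hassoc α β x l))
  have RGraw := (side α β).symm.trans (HHassoc.trans (side β α))
  have cv1 : (∑ x, ∑ m, c α m x * D γ (c β x m))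
      = ∑ m, ∑ x, c α m x * D γ (c β x m) := Finset.sum_comm
  have cv2 : (∑ x, ∑ m, μ m • (c α m x * D γ (c β x m)))
      = ∑ m, ∑ x, μ m • (c α m x * D γ (c β x m)) := Finset.sum_comm
  have cv3 : (∑ x, ∑ m, μ x • (c α m x * D γ (c β x m)))
      = ∑ m, ∑ x, μ x • (c α m x * D γ (c β x m)) := Finset.sum_comm
  have cv4 : (∑ x, ∑ m, c β x m * D γ (c α m x))
      = ∑ m, ∑ x, c β x m * D γ (c α m x) := Finset.sum_comm
  have cv5 : (∑ x, ∑ m, μ m • (c β x m * D γ (c α m x)))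
      = ∑ m, ∑ x, μ m • (c β x m * D γ (c α m x)) := Finset.sum_comm
  have cv6 : (∑ x, ∑ m, μ x • (c β x m * D γ (c α m x)))
      = ∑ m, ∑ x, μ x • (c β x m * D γ (c α m x)) := Finset.sum_comm
  rw [cv1, cv2, cv3, cv4, cv5, cv6] at RGraw
  -- ===================== final assembly =====================
  rw [HLin, HS1, HS2, HLP, HLPp, HRP, HRPp, HWpre, HR5, HR6, HR7]
  rw [map_add, map_add, map_sub, Derivation.map_smul, Derivation.map_smul, HDB, HBmuD,
    HDW α β, HDW β α]
  linear_combination (norm := module) (1/12 : ℂ) • RGraw + (1/6 : ℂ) • hXY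
    - (1/6 : ℂ) • hXxYx + ((1/12 : ℂ) - δ/24 - μ γ/12) • Rel1
end

section
/- Let $K=(K^{\alpha\beta})$ be a matrix of differential operators $K^{\alpha\beta}=\sum_{j\ge 0}K^{\alpha\beta}_j\partial_x^j$ with coefficients differential polynomials (or tame rational functions) in $u^*_*$, and let $u^\alpha\mapsto \tilde{u}^\alpha(u^*_*)$ be an invertible change of variables such that $\tilde{u}^\alpha - u^\alpha\in\operatorname{Im}\partial_x$. Define the transformed operator $K_{\tilde u}^{\alpha\beta}=\sum_{m,n\ge 0}\frac{\partial\tilde u^\alpha}{\partial u^\rho_m}\partial_x^m\circ K^{\rho\theta}\circ(-\partial_x)^n\circ\frac{\partial\tilde u^\beta}{\partial u^\theta_n}$ (rewritten in the new variables). Then the constant term (coefficient of $\partial_x^0$) of $K_{\tilde u}^{\alpha\beta}$ equals $\sum_{m\ge 0}\frac{\partial\tilde u^\alpha}{\partial u^\rho_m}\,\partial_x^m K^{\rho\beta}_0$, where $K^{\rho\beta}_0$ is the constant term of $K^{\rho\beta}$. -/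
open scoped BigOperators
open MvPolynomial Function

section Aux

variable {N : ℕ}

-- iterate lemmas for a derivation
lemma dxit_add (dx : Derivation ℂ (MvPolynomial (Fin N × ℕ) ℂ) (MvPolynomial (Fin N × ℕ) ℂ))
    (k : ℕ) (a b : MvPolynomial (Fin N × ℕ) ℂ) :
    (⇑dx)^[k] (a + b) = (⇑dx)^[k] a + (⇑dx)^[k] b := by
  induction k generalizing a b with
  | zero => rfl
  | succ k ih => rw [Function.iterate_succ_apply, map_add, ih, ← Function.iterate_succ_apply, ← Function.iterate_succ_apply]

lemma dxit_zero (dx : Derivation ℂ (MvPolynomial (Fin N × ℕ) ℂ) (MvPolynomial (Fin N × ℕ) ℂ))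
    (k : ℕ) : (⇑dx)^[k] (0 : MvPolynomial (Fin N × ℕ) ℂ) = 0 := by
  induction k with
  | zero => rfl
  | succ k ih => rw [Function.iterate_succ_apply, map_zero, ih]

lemma dxit_smul (dx : Derivation ℂ (MvPolynomial (Fin N × ℕ) ℂ) (MvPolynomial (Fin N × ℕ) ℂ))
    (k : ℕ) (c : ℂ) (a : MvPolynomial (Fin N × ℕ) ℂ) :
    (⇑dx)^[k] (c • a) = c • (⇑dx)^[k] a := by
  induction k generalizing a with
  | zero => rfl
  | succ k ih => rw [Function.iterate_succ_apply, dx.map_smul, ih, ← Function.iterate_succ_apply]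

lemma dxit_finsetSum {ι : Type*} (dx : Derivation ℂ (MvPolynomial (Fin N × ℕ) ℂ) (MvPolynomial (Fin N × ℕ) ℂ))
    (k : ℕ) (s : Finset ι) (f : ι → MvPolynomial (Fin N × ℕ) ℂ) :
    (⇑dx)^[k] (∑ i ∈ s, f i) = ∑ i ∈ s, (⇑dx)^[k] (f i) := by
  classical
  induction s using Finset.induction_on with
  | empty => simp [dxit_zero]
  | @insert a s ha ih => rw [Finset.sum_insert ha, Finset.sum_insert ha, dxit_add, ih]

lemma pderiv_bound (θ : Fin N) (q : MvPolynomial (Fin N × ℕ) ℂ) :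
    ∃ M : ℕ, ∀ n, M ≤ n → pderiv (θ, n) q = 0 := by
  refine ⟨(q.vars.sup Prod.snd) + 1, fun n hn => ?_⟩
  apply pderiv_eq_zero_of_notMem_vars
  intro hmem
  have := Finset.le_sup (f := Prod.snd) hmem
  simp only at this
  omega

end Aux

section Comm

variable {N : ℕ}
variable (dx : Derivation ℂ (MvPolynomial (Fin N × ℕ) ℂ) (MvPolynomial (Fin N × ℕ) ℂ))
variable (hdx : dx = MvPolynomial.mkDerivation ℂ
      (fun v : Fin N × ℕ => MvPolynomial.X (v.1, v.2 + 1)))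

include hdx

lemma dx_X (a : Fin N) (k : ℕ) : dx (X (a, k)) = X (a, k + 1) := by
  rw [hdx, mkDerivation_X]

lemma pderiv_dx_succ (θ : Fin N) (n : ℕ) (p : MvPolynomial (Fin N × ℕ) ℂ) :
    pderiv (θ, n + 1) (dx p) = dx (pderiv (θ, n + 1) p) + pderiv (θ, n) p := by
  have key : ⁅(pderiv (θ, n + 1) : Derivation ℂ (MvPolynomial (Fin N × ℕ) ℂ)
      (MvPolynomial (Fin N × ℕ) ℂ)), dx⁆ = pderiv (θ, n) := by
    apply derivation_ext
    rintro ⟨a, k⟩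
    rw [Derivation.commutator_apply, dx_X dx hdx]
    have h2 : dx (pderiv (θ, n + 1) (X (a, k))) = 0 := by
      by_cases hak : (a, k) = (θ, n + 1)
      · rw [hak, pderiv_X_self, Derivation.map_one_eq_zero]
      · rw [pderiv_X_of_ne hak, map_zero]
    rw [h2, sub_zero]
    by_cases hak : (a, k) = (θ, n)
    · rw [Prod.mk.injEq] at hak
      obtain ⟨h1, h3⟩ := hak
      subst h1; subst h3
      rw [pderiv_X_self, pderiv_X_self]
    · rw [pderiv_X_of_ne hak, pderiv_X_of_ne (by
        intro hc
        apply hak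
        obtain ⟨h1, h2⟩ := Prod.mk.injEq .. ▸ hc
        exact Prod.ext h1 (by omega))]
  have := DFunLike.congr_fun key p
  rw [Derivation.commutator_apply] at this
  linear_combination (norm := module) this

lemma pderiv_dx_zero (θ : Fin N) (p : MvPolynomial (Fin N × ℕ) ℂ) :
    pderiv (θ, 0) (dx p) = dx (pderiv (θ, 0) p) := by
  have key : ⁅(pderiv (θ, 0) : Derivation ℂ (MvPolynomial (Fin N × ℕ) ℂ)
      (MvPolynomial (Fin N × ℕ) ℂ)), dx⁆ = 0 := by
    apply derivation_ext
    rintro ⟨a, k⟩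
    rw [Derivation.commutator_apply, dx_X dx hdx]
    have h2 : dx (pderiv (θ, 0) (X (a, k))) = 0 := by
      by_cases hak : (a, k) = (θ, 0)
      · rw [hak, pderiv_X_self, Derivation.map_one_eq_zero]
      · rw [pderiv_X_of_ne hak, map_zero]
    rw [h2, sub_zero, pderiv_X_of_ne (by simp), Derivation.coe_zero, Pi.zero_apply]
  have := DFunLike.congr_fun key p
  rw [Derivation.commutator_apply] at this
  have h0 : (0 : Derivation ℂ (MvPolynomial (Fin N × ℕ) ℂ) (MvPolynomial (Fin N × ℕ) ℂ)) p = 0 := rfl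
  rw [h0] at this
  linear_combination (norm := module) this

end Comm

section Tel

variable {N : ℕ}
variable (dx : Derivation ℂ (MvPolynomial (Fin N × ℕ) ℂ) (MvPolynomial (Fin N × ℕ) ℂ))
variable (hdx : dx = MvPolynomial.mkDerivation ℂ
      (fun v : Fin N × ℕ => MvPolynomial.X (v.1, v.2 + 1)))

include hdx

lemma telescope_sum (θ : Fin N) (p : MvPolynomial (Fin N × ℕ) ℂ) (L : ℕ) :
    ∑ n ∈ Finset.range (L + 1), ((-1 : ℂ) ^ n • (⇑dx)^[n] (pderiv (θ, n) (dx p)))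
      = (-1 : ℂ) ^ L • (⇑dx)^[L + 1] (pderiv (θ, L) p) := by
  induction L with
  | zero =>
    rw [Finset.sum_range_one, pderiv_dx_zero dx hdx]
    simp
  | succ L ih =>
    rw [Finset.sum_range_succ, ih, pderiv_dx_succ dx hdx,
      dxit_add, ← Function.iterate_succ_apply]
    rw [pow_succ]
    module

lemma telescope (θ : Fin N) (p : MvPolynomial (Fin N × ℕ) ℂ) :
    ∑ᶠ n : ℕ, ((-1 : ℂ) ^ n • (⇑dx)^[n] (pderiv (θ, n) (dx p))) = 0 := by
  obtain ⟨M₁, h₁⟩ := pderiv_bound θ p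
  obtain ⟨M₂, h₂⟩ := pderiv_bound θ (dx p)
  set M := max M₁ M₂ with hM
  have hsub : Function.support (fun n => (-1 : ℂ) ^ n • (⇑dx)^[n] (pderiv (θ, n) (dx p)))
      ⊆ (Finset.range (M + 1) : Finset ℕ) := by
    intro n hn
    simp only [Finset.coe_range, Set.mem_Iio]
    by_contra hc
    apply hn
    simp only [Function.mem_support] at *
    rw [h₂ n (by omega), dxit_zero, smul_zero]
  rw [finsum_eq_sum_of_support_subset _ hsub, telescope_sum dx hdx,
    h₁ M (le_max_left _ _), dxit_zero, smul_zero]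

omit hdx in
lemma support_fin (θ : Fin N) (q : MvPolynomial (Fin N × ℕ) ℂ) :
    (Function.support (fun n => (-1 : ℂ) ^ n • (⇑dx)^[n] (pderiv (θ, n) q))).Finite := by
  obtain ⟨M, hMp⟩ := pderiv_bound θ q
  apply Set.Finite.subset (Set.finite_Iio M)
  intro n hn
  simp only [Function.mem_support] at hn
  simp only [Set.mem_Iio]
  by_contra hc
  exact hn (by rw [hMp n (by omega), dxit_zero, smul_zero])

lemma varder (tu h : Fin N → MvPolynomial (Fin N × ℕ) ℂ)
    (htu : ∀ a : Fin N, tu a = MvPolynomial.X (a, 0) + dx (h a)) (θ β : Fin N) :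
    ∑ᶠ n : ℕ, ((-1 : ℂ) ^ n • (⇑dx)^[n] (pderiv (θ, n) (tu β)))
      = if θ = β then 1 else 0 := by
  have hsplit : ∑ᶠ n : ℕ, ((-1 : ℂ) ^ n • (⇑dx)^[n] (pderiv (θ, n) (tu β)))
      = ∑ᶠ n : ℕ, ((-1 : ℂ) ^ n • (⇑dx)^[n] (pderiv (θ, n) (X (β, 0)))
      + (-1 : ℂ) ^ n • (⇑dx)^[n] (pderiv (θ, n) (dx (h β)))) :=
    finsum_congr (fun n => by rw [htu β, map_add, dxit_add, smul_add])
  rw [hsplit, finsum_add_distrib (support_fin dx θ _) (support_fin dx θ _),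
    telescope dx hdx, add_zero]
  rw [finsum_eq_single _ 0 (fun n hn => by
    rw [pderiv_X_of_ne (by simpa using fun _ => (Ne.symm hn)), dxit_zero, smul_zero])]
  by_cases hθβ : θ = β
  · subst hθβ
    simp [pderiv_X_self]
  · rw [pderiv_X_of_ne (by simp [Prod.ext_iff]; intro hc; exact absurd hc.symm hθβ)]
    simp [hθβ]

end Tel

section Swap

variable {M : Type*} [AddCommMonoid M] {ι : Type*}

lemma support_sum_fin (s : Finset ι) (f : ι → ℕ → M)
    (hf : ∀ i ∈ s, (Function.support (f i)).Finite) :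
    (Function.support (fun n => ∑ i ∈ s, f i n)).Finite := by
  classical
  apply Set.Finite.subset (Set.Finite.biUnion s.finite_toSet hf)
  intro n hn
  simp only [Function.mem_support] at hn
  by_contra hc
  apply hn
  apply Finset.sum_eq_zero
  intro i hi
  by_contra hfi
  exact hc (Set.mem_biUnion hi hfi)

lemma finsum_finsetSum (s : Finset ι) (f : ι → ℕ → M)
    (hf : ∀ i ∈ s, (Function.support (f i)).Finite) :
    ∑ᶠ n : ℕ, ∑ i ∈ s, f i n = ∑ i ∈ s, ∑ᶠ n : ℕ, f i n := by
  classical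
  induction s using Finset.induction_on with
  | empty => simp
  | @insert a s ha ih =>
    have h1 : (Function.support (f a)).Finite := hf a (Finset.mem_insert_self a s)
    have h2 : (Function.support (fun n => ∑ i ∈ s, f i n)).Finite :=
      support_sum_fin s f (fun i hi => hf i (Finset.mem_insert_of_mem hi))
    rw [finsum_congr (fun n => Finset.sum_insert ha), finsum_add_distrib h1 h2,
      Finset.sum_insert ha, ih (fun i hi => hf i (Finset.mem_insert_of_mem hi))]

end Swap


/-- Lemma 4.1: for a matrix operator `K^{αβ} = ∑_j K^{αβ}_j ∂_x^j` and a
change of variables `ũ^α` with `ũ^α - u^α ∈ Im ∂_x`, the constant term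
(coefficient of `∂_x^0`, i.e. the value on `1`) of the transformed operator
`K_{ũ}^{αβ} = ∑_{m,n} (∂ũ^α/∂u^ρ_m) ∂_x^m ∘ K^{ρθ} ∘ (-∂_x)^n ∘ (∂ũ^β/∂u^θ_n)`
equals `∑_m (∂ũ^α/∂u^ρ_m) ∂_x^m K^{ρβ}_0`. -/
theorem miura_constant_term (N : ℕ)
    (dx : Derivation ℂ (MvPolynomial (Fin N × ℕ) ℂ) (MvPolynomial (Fin N × ℕ) ℂ))
    (hdx : dx = MvPolynomial.mkDerivation ℂ
      (fun v : Fin N × ℕ => MvPolynomial.X (v.1, v.2 + 1)))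
    (K : Fin N → Fin N → ℕ → MvPolynomial (Fin N × ℕ) ℂ)
    (hKfin : ∀ ρ θ : Fin N, ∃ M : ℕ, ∀ j : ℕ, M ≤ j → K ρ θ j = 0)
    (Kop : Fin N → Fin N → MvPolynomial (Fin N × ℕ) ℂ → MvPolynomial (Fin N × ℕ) ℂ)
    (hKop : ∀ (ρ θ : Fin N) (g : MvPolynomial (Fin N × ℕ) ℂ),
      Kop ρ θ g = ∑ᶠ j : ℕ, K ρ θ j * (⇑dx)^[j] g)
    (tu h : Fin N → MvPolynomial (Fin N × ℕ) ℂ)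
    (htu : ∀ a : Fin N, tu a = MvPolynomial.X (a, 0) + dx (h a))
    (Ktu : Fin N → Fin N → MvPolynomial (Fin N × ℕ) ℂ → MvPolynomial (Fin N × ℕ) ℂ)
    (hKtu : ∀ (α β : Fin N) (g : MvPolynomial (Fin N × ℕ) ℂ),
      Ktu α β g = ∑ᶠ m : ℕ, ∑ᶠ n : ℕ, ∑ ρ, ∑ θ,
        MvPolynomial.pderiv (ρ, m) (tu α) *
          (⇑dx)^[m] (Kop ρ θ (((-1 : ℂ) ^ n) •
            (⇑dx)^[n] (MvPolynomial.pderiv (θ, n) (tu β) * g))))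
    (α β : Fin N) :
    Ktu α β 1 = ∑ᶠ m : ℕ, ∑ ρ,
      MvPolynomial.pderiv (ρ, m) (tu α) * (⇑dx)^[m] (K ρ β 0) := by
  rw [hKtu]
  simp only [mul_one]
  -- `g θ n` : the argument fed to Kop
  set g : Fin N → ℕ → MvPolynomial (Fin N × ℕ) ℂ :=
    fun θ n => (-1 : ℂ) ^ n • (⇑dx)^[n] (pderiv (θ, n) (tu β)) with hg
  have hKop0 : ∀ ρ θ : Fin N, Kop ρ θ 0 = 0 := by
    intro ρ θ
    rw [hKop]
    simp [dxit_zero]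
  apply finsum_congr
  intro m
  have htermfin : ∀ ρ θ : Fin N,
      (Function.support (fun n =>
        pderiv (ρ, m) (tu α) * (⇑dx)^[m] (Kop ρ θ (g θ n)))).Finite := by
    intro ρ θ
    apply Set.Finite.subset (support_fin dx θ (tu β))
    intro n hn
    simp only [Function.mem_support] at *
    intro hgz
    apply hn
    have hgz' : g θ n = 0 := hgz
    rw [hgz', hKop0, dxit_zero, mul_zero]
  rw [finsum_finsetSum Finset.univ _
    (fun ρ _ => support_sum_fin Finset.univ _ (fun θ _ => htermfin ρ θ))]
  apply Finset.sum_congr rfl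
  intro ρ _
  rw [finsum_finsetSum Finset.univ _ (fun θ _ => htermfin ρ θ)]
  have hterm : ∀ θ : Fin N,
      ∑ᶠ n : ℕ, pderiv (ρ, m) (tu α) * (⇑dx)^[m] (Kop ρ θ (g θ n))
        = if θ = β then pderiv (ρ, m) (tu α) * (⇑dx)^[m] (K ρ β 0) else 0 := by
    intro θ
    obtain ⟨Mk, hMk⟩ := hKfin ρ θ
    set L : MvPolynomial (Fin N × ℕ) ℂ →ₗ[ℂ] MvPolynomial (Fin N × ℕ) ℂ :=
      ∑ j ∈ Finset.range Mk,
        (LinearMap.mulLeft ℂ (K ρ θ j)) ∘ₗ ((dx : MvPolynomial (Fin N × ℕ) ℂ →ₗ[ℂ]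
          MvPolynomial (Fin N × ℕ) ℂ) ^ j) with hL
    set φ : MvPolynomial (Fin N × ℕ) ℂ →ₗ[ℂ] MvPolynomial (Fin N × ℕ) ℂ :=
      (LinearMap.mulLeft ℂ (pderiv (ρ, m) (tu α))) ∘ₗ
        (((dx : MvPolynomial (Fin N × ℕ) ℂ →ₗ[ℂ] MvPolynomial (Fin N × ℕ) ℂ) ^ m) ∘ₗ L)
      with hφdef
    have hφ : ∀ x, φ x = pderiv (ρ, m) (tu α) * (⇑dx)^[m] (Kop ρ θ x) := by
      intro x
      rw [hKop ρ θ x,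
        finsum_eq_sum_of_support_subset _ (s := Finset.range Mk) (fun j hj => by
          simp only [Function.mem_support] at hj
          simp only [Finset.coe_range, Set.mem_Iio]
          by_contra hc
          exact hj (by rw [hMk j (by omega), zero_mul]))]
      rw [hφdef, hL]
      simp only [LinearMap.comp_apply, LinearMap.sum_apply, LinearMap.mulLeft_apply,
        Module.End.pow_apply, Derivation.coeFn_coe, map_sum]
      rw [dxit_finsetSum, Finset.mul_sum]
    calc ∑ᶠ n : ℕ, pderiv (ρ, m) (tu α) * (⇑dx)^[m] (Kop ρ θ (g θ n))
        = ∑ᶠ n : ℕ, φ (g θ n) := finsum_congr (fun n => (hφ _).symm)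
      _ = φ (∑ᶠ n : ℕ, g θ n) :=
          (φ.toAddMonoidHom.map_finsum (support_fin dx θ (tu β))).symm
      _ = φ (if θ = β then 1 else 0) := by rw [hg]; rw [varder dx hdx tu h htu θ β]
      _ = if θ = β then pderiv (ρ, m) (tu α) * (⇑dx)^[m] (K ρ β 0) else 0 := by
          by_cases hθβ : θ = β
          · rw [if_pos hθβ, if_pos hθβ, hφ]
            subst hθβ
            congr 2
            rw [hKop]
            rw [finsum_eq_single _ 0 (fun j hj => by
              obtain ⟨j', rfl⟩ := Nat.exists_eq_succ_of_ne_zero hj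
              rw [Function.iterate_succ_apply, Derivation.map_one_eq_zero, dxit_zero,
                mul_zero])]
            simp
          · rw [if_neg hθβ, if_neg hθβ, map_zero]
  rw [Finset.sum_congr rfl (fun θ _ => hterm θ)]
  simp
end

section
/- Let $c^{\alpha\beta}_\gamma$ be homogeneous Frobenius structure constants as functions of $u^1,\dots,u^N$ (from a potential, satisfying WDVV associativity and the homogeneity relation $e^\lambda c^{\alpha\beta}_{\lambda\gamma}=(\delta-q_\alpha-q_\beta+q_\gamma)c^{\alpha\beta}_\gamma$ with $e^\gamma=(1-q_\gamma)u^\gamma+r^\gamma$ and $\mu_\alpha=q_\alpha-\delta/2$, $\mu_\nu c^{\nu\mu}_\nu=0$). Then the following identity holds (Einstein summation): $(1-q_\nu)c^{\nu\mu}_\nu c^{\alpha\beta}_\mu + e^\gamma\partial_\nu\big(c^{\nu\mu}_\gamma c^{\alpha\beta}_\mu\big) = \frac{2-\mu_\alpha-\mu_\beta}{2}\,c^{\gamma\sigma}_\gamma c^{\alpha\beta}_\sigma + \frac{1}{2}e^\gamma\big(c^{\alpha\lambda}_{\nu\lambda}c^{\nu\beta}_\gamma + c^{\alpha\nu}_\gamma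 c^{\beta\lambda}_{\nu\lambda}\big)$, where $c^{\alpha\beta}_{\gamma\delta}=\partial_\delta c^{\alpha\beta}_\gamma$. -/
open scoped BigOperators

/-- Intermediate reformulation of the `∂_x^3` coefficient identity:
`(1-q_ν) c^{νμ}_ν c^{αβ}_μ + e^γ ∂_ν(c^{νμ}_γ c^{αβ}_μ)
 = ((2-μ_α-μ_β)/2) c^{γσ}_γ c^{αβ}_σ
   + (1/2) e^γ (c^{αλ}_{νλ} c^{νβ}_γ + c^{αν}_γ c^{βλ}_{νλ})`
(Einstein summation; `c a b g` denotes `c^{ab}_g`, `c^{αβ}_{γδ}=∂_δ c^{αβ}_γ`). -/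
theorem l3_intermediate_identity (N : ℕ) (R : Type*) [CommRing R] [Algebra ℂ R]
    (D : Fin N → Derivation ℂ R R)
    (hcomm : ∀ a b : Fin N, ∀ x : R, D a (D b x) = D b (D a x))
    (u : Fin N → R) (hu : ∀ a b : Fin N, D a (u b) = if a = b then 1 else 0)
    (q r : Fin N → ℂ) (δ : ℂ)
    (c : Fin N → Fin N → Fin N → R)
    (hupsym : ∀ α β γ : Fin N, c α β γ = c β α γ)
    (hpot : ∀ α β γ δ' : Fin N, D δ' (c α β γ) = D γ (c α β δ'))
    (hassoc : ∀ α β γ m : Fin N,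
      (∑ ν, c α ν m * c β γ ν) = ∑ ν, c β ν m * c α γ ν)
    (e : Fin N → R)
    (he : ∀ γ : Fin N, e γ = (1 - q γ) • u γ + algebraMap ℂ R (r γ))
    (hhom : ∀ α β γ : Fin N,
      (∑ lam, e lam * D γ (c α β lam)) = (δ - q α - q β + q γ) • c α β γ)
    (μ : Fin N → ℂ) (hμ : ∀ α : Fin N, μ α = q α - δ / 2)
    (hmucontr : ∀ m : Fin N, (∑ ν, μ ν • c ν m ν) = 0)
    (g : Fin N → Fin N → R)
    (hg : ∀ α β : Fin N, g α β = ∑ γ, e γ * c α β γ)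
    (α β : Fin N) :
    (∑ ν, ∑ m, (1 - q ν) • (c ν m ν * c α β m))
        + (∑ γ, ∑ ν, ∑ m, e γ * D ν (c ν m γ * c α β m))
      = ((2 - μ α - μ β)/2) • (∑ γ, ∑ σ, c γ σ γ * c α β σ)
        + (1/2 : ℂ) • ((∑ γ, ∑ ν, ∑ lam, e γ * (D lam (c α lam ν) * c ν β γ))
            + ∑ γ, ∑ ν, ∑ lam, e γ * (c α ν γ * D lam (c β lam ν))) := by
  classical
  simp only [hμ]
  -- derivative of e
  have hDe : ∀ σ γ : Fin N, D σ (e γ) = (1 - q γ) • (if σ = γ then (1:R) else 0) := by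
    intro σ γ
    rw [he γ, map_add, Derivation.map_smul, hu, Derivation.map_algebraMap, add_zero]
  -- derivative of the metric sum
  have hDG : ∀ (σ x y : Fin N), D σ (∑ γ, e γ * c x y γ) = (1 + δ - q x - q y) • c x y σ := by
    intro σ x y
    rw [map_sum]
    have h1 : ∀ γ : Fin N, D σ (e γ * c x y γ)
        = e γ * D σ (c x y γ) + (if σ = γ then (1 - q γ) • c x y γ else 0) := by
      intro γ
      rw [Derivation.leibniz, smul_eq_mul, smul_eq_mul, hDe]
      by_cases h : σ = γ
      · simp [h, mul_smul_comm]
      · simp [h]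
    calc (∑ γ, D σ (e γ * c x y γ))
        = (∑ γ, e γ * D σ (c x y γ)) + ∑ γ, (if σ = γ then (1 - q γ) • c x y γ else 0) := by
          rw [← Finset.sum_add_distrib]; exact Finset.sum_congr rfl fun γ _ => h1 γ
      _ = (δ - q x - q y + q σ) • c x y σ + (1 - q σ) • c x y σ := by
          rw [hhom x y σ, Finset.sum_ite_eq]; simp
      _ = (1 + δ - q x - q y) • c x y σ := by
          rw [← add_smul]; congr 1; ring
  -- mu-contraction rearranged
  have hQ : ∀ m : Fin N, (∑ ν, q ν • c ν m ν) = (δ/2) • ∑ ν, c ν m ν := by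
    intro m
    have h := hmucontr m
    simp only [hμ, sub_smul] at h
    rw [Finset.sum_sub_distrib, sub_eq_zero] at h
    rw [h, ← Finset.smul_sum]
  -- generic weighted-trace collapse
  have hW' : ∀ (k : Fin N → ℂ) (F : Fin N → R),
      (∑ t, ∑ s, (k t - q s) • (c s t s * F t))
        = ∑ t, (k t - δ/2) • ((∑ s, c s t s) * F t) := by
    intro k F
    refine Finset.sum_congr rfl fun t _ => ?_
    have key : ∀ s : Fin N, (k t - q s) • (c s t s * F t)
        = k t • (c s t s * F t) - q s • (c s t s * F t) := fun s => by rw [← sub_smul]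
    rw [Finset.sum_congr rfl fun s _ => key s, Finset.sum_sub_distrib, ← Finset.smul_sum,
      ← Finset.sum_mul]
    have h2 : (∑ s, q s • (c s t s * F t)) = ((δ/2) • ∑ s, c s t s) * F t := by
      simp only [← smul_mul_assoc]
      rw [← Finset.sum_mul, hQ t]
    rw [h2, smul_mul_assoc, ← sub_smul]
  -- trace symmetry from associativity
  have hTrace : ∀ (x y m : Fin N), (∑ ν, c x m ν * c y ν m) = ∑ ν, c m ν m * c x y ν := by
    intro x y m
    calc (∑ ν, c x m ν * c y ν m)
        = ∑ ν, c y ν m * c m x ν := by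
          refine Finset.sum_congr rfl fun ν _ => ?_
          rw [hupsym x m, mul_comm]
      _ = ∑ ν, c m ν m * c y x ν := hassoc y m x m
      _ = ∑ ν, c m ν m * c x y ν := by
          refine Finset.sum_congr rfl fun ν _ => ?_
          rw [hupsym y x]
  -- metric-weighted symmetry
  have hS : ∀ (ν x y : Fin N),
      (∑ m, (∑ γ, e γ * c ν m γ) * c x y m) = ∑ m, (∑ γ, e γ * c x m γ) * c ν y m := by
    intro ν x y
    simp only [Finset.sum_mul]
    rw [Finset.sum_comm]
    have h : ∀ γ : Fin N, (∑ m, e γ * c ν m γ * c x y m) = ∑ m, e γ * c x m γ * c ν y m := by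
      intro γ
      simp only [mul_assoc]
      rw [← Finset.mul_sum, ← Finset.mul_sum, hassoc ν x y γ]
    rw [Finset.sum_congr rfl fun γ _ => h γ]
    exact Finset.sum_comm
  -- Leibniz expansion of D ν (Σ_m G a m * F m)
  have hExpand : ∀ (ν a : Fin N) (F : Fin N → R),
      D ν (∑ m, (∑ γ, e γ * c a m γ) * F m)
        = (∑ m, (∑ γ, e γ * c a m γ) * D ν (F m))
          + ∑ m, (1 + δ - q a - q m) • (c a m ν * F m) := by
    intro ν a F
    rw [map_sum, ← Finset.sum_add_distrib]
    refine Finset.sum_congr rfl fun m _ => ?_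
    rw [Derivation.leibniz, smul_eq_mul, smul_eq_mul, hDG ν a m, mul_smul_comm,
      mul_comm (F m)]
  have hX1 : (∑ γ, ∑ ν, ∑ m, e γ * (c ν m γ * D ν (c α β m)))
      + (∑ ν, ∑ m, (1 + δ - q ν - q m) • (c ν m ν * c α β m))
      = (∑ m, (∑ γ, e γ * c α m γ) * ∑ lam, D lam (c lam β m))
        + ∑ ν, ∑ m, (1 + δ - q α - q m) • (c α m ν * c ν β m) := by
    have hd : (∑ ν, D ν (∑ m, (∑ γ, e γ * c ν m γ) * c α β m))
        = ∑ ν, D ν (∑ m, (∑ γ, e γ * c α m γ) * c ν β m) :=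
      Finset.sum_congr rfl fun ν _ => by rw [hS ν α β]
    rw [Finset.sum_congr rfl fun ν _ => hExpand ν ν (fun m => c α β m),
        Finset.sum_congr rfl fun ν _ => hExpand ν α (fun m => c ν β m),
        Finset.sum_add_distrib, Finset.sum_add_distrib] at hd
    have h1 : (∑ ν, ∑ m, (∑ γ, e γ * c ν m γ) * D ν (c α β m))
        = ∑ γ, ∑ ν, ∑ m, e γ * (c ν m γ * D ν (c α β m)) := by
      simp only [Finset.sum_mul, mul_assoc]
      exact (Finset.sum_congr rfl fun ν _ => Finset.sum_comm).trans Finset.sum_comm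
    have h2 : (∑ ν, ∑ m, (∑ γ, e γ * c α m γ) * D ν (c ν β m))
        = ∑ m, (∑ γ, e γ * c α m γ) * ∑ lam, D lam (c lam β m) := by
      rw [Finset.sum_comm]
      exact Finset.sum_congr rfl fun m _ => (Finset.mul_sum _ _ _).symm
    rw [h1, h2] at hd
    exact hd
  have hX2 : (∑ γ, ∑ ν, ∑ m, e γ * (c ν m γ * D ν (c α β m)))
      + (∑ ν, ∑ m, (1 + δ - q ν - q m) • (c ν m ν * c α β m))
      = (∑ m, (∑ γ, e γ * c β m γ) * ∑ lam, D lam (c lam α m))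
        + ∑ ν, ∑ m, (1 + δ - q β - q m) • (c β m ν * c ν α m) := by
    have hd : (∑ ν, D ν (∑ m, (∑ γ, e γ * c ν m γ) * c α β m))
        = ∑ ν, D ν (∑ m, (∑ γ, e γ * c β m γ) * c ν α m) :=
      Finset.sum_congr rfl fun ν _ =>
        congrArg (D ν)
          ((Finset.sum_congr rfl fun m _ => by rw [hupsym α β]).trans (hS ν β α))
    rw [Finset.sum_congr rfl fun ν _ => hExpand ν ν (fun m => c α β m),
        Finset.sum_congr rfl fun ν _ => hExpand ν β (fun m => c ν α m),
        Finset.sum_add_distrib, Finset.sum_add_distrib] at hd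
    have h1 : (∑ ν, ∑ m, (∑ γ, e γ * c ν m γ) * D ν (c α β m))
        = ∑ γ, ∑ ν, ∑ m, e γ * (c ν m γ * D ν (c α β m)) := by
      simp only [Finset.sum_mul, mul_assoc]
      exact (Finset.sum_congr rfl fun ν _ => Finset.sum_comm).trans Finset.sum_comm
    have h2 : (∑ ν, ∑ m, (∑ γ, e γ * c β m γ) * D ν (c ν α m))
        = ∑ m, (∑ γ, e γ * c β m γ) * ∑ lam, D lam (c lam α m) := by
      rw [Finset.sum_comm]
      exact Finset.sum_congr rfl fun m _ => (Finset.mul_sum _ _ _).symm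
    rw [h1, h2] at hd
    exact hd
  -- trace-term conversions
  have hTa : (∑ ν, ∑ m, (1 + δ - q α - q m) • (c α m ν * c ν β m))
      = ∑ m, (1 + δ - q α - δ/2) • ((∑ s, c s m s) * c α β m) := by
    calc (∑ ν, ∑ m, (1 + δ - q α - q m) • (c α m ν * c ν β m))
        = ∑ m, ∑ ν, (1 + δ - q α - q m) • (c α m ν * c β ν m) := by
          rw [Finset.sum_comm]
          exact Finset.sum_congr rfl fun m _ => Finset.sum_congr rfl fun ν _ => by
            rw [hupsym ν β]
      _ = ∑ m, ∑ ν, (1 + δ - q α - q m) • (c m ν m * c α β ν) := by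
          refine Finset.sum_congr rfl fun m _ => ?_
          rw [← Finset.smul_sum, ← Finset.smul_sum, hTrace α β m]
      _ = ∑ ν, ∑ m, (1 + δ - q α - q m) • (c m ν m * c α β ν) := Finset.sum_comm
      _ = ∑ m, (1 + δ - q α - δ/2) • ((∑ s, c s m s) * c α β m) :=
          hW' (fun _ => 1 + δ - q α) (fun ν => c α β ν)
  have hTb : (∑ ν, ∑ m, (1 + δ - q β - q m) • (c β m ν * c ν α m))
      = ∑ m, (1 + δ - q β - δ/2) • ((∑ s, c s m s) * c α β m) := by
    calc (∑ ν, ∑ m, (1 + δ - q β - q m) • (c β m ν * c ν α m))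
        = ∑ m, ∑ ν, (1 + δ - q β - q m) • (c β m ν * c α ν m) := by
          rw [Finset.sum_comm]
          exact Finset.sum_congr rfl fun m _ => Finset.sum_congr rfl fun ν _ => by
            rw [hupsym ν α]
      _ = ∑ m, ∑ ν, (1 + δ - q β - q m) • (c m ν m * c α β ν) := by
          refine Finset.sum_congr rfl fun m _ => ?_
          rw [← Finset.smul_sum, ← Finset.smul_sum, hTrace β α m]
          exact congrArg _ (Finset.sum_congr rfl fun ν _ => by rw [hupsym β α])
      _ = ∑ ν, ∑ m, (1 + δ - q β - q m) • (c m ν m * c α β ν) := Finset.sum_comm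
      _ = ∑ m, (1 + δ - q β - δ/2) • ((∑ s, c s m s) * c α β m) :=
          hW' (fun _ => 1 + δ - q β) (fun ν => c α β ν)
  have hWmain : (∑ ν, ∑ m, (1 + δ - q ν - q m) • (c ν m ν * c α β m))
      = ∑ m, (1 + δ - q m - δ/2) • ((∑ s, c s m s) * c α β m) := by
    calc (∑ ν, ∑ m, (1 + δ - q ν - q m) • (c ν m ν * c α β m))
        = ∑ m, ∑ ν, (1 + δ - q m - q ν) • (c ν m ν * c α β m) := by
          rw [Finset.sum_comm]
          exact Finset.sum_congr rfl fun m _ => Finset.sum_congr rfl fun ν _ => by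
            rw [show (1 + δ - q ν - q m) = (1 + δ - q m - q ν) from by ring]
      _ = ∑ m, (1 + δ - q m - δ/2) • ((∑ s, c s m s) * c α β m) :=
          hW' (fun m => 1 + δ - q m) (fun m => c α β m)
  -- splitting the Leibniz derivative in the goal
  have hsplitT2 : (∑ γ, ∑ ν, ∑ m, e γ * D ν (c ν m γ * c α β m))
      = (∑ γ, ∑ ν, ∑ m, e γ * (c ν m γ * D ν (c α β m)))
        + ∑ γ, ∑ ν, ∑ m, e γ * (c α β m * D ν (c ν m γ)) := by
    rw [← Finset.sum_add_distrib]
    refine Finset.sum_congr rfl fun γ _ => ?_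
    rw [← Finset.sum_add_distrib]
    refine Finset.sum_congr rfl fun ν _ => ?_
    rw [← Finset.sum_add_distrib]
    refine Finset.sum_congr rfl fun m _ => ?_
    rw [Derivation.leibniz, smul_eq_mul, smul_eq_mul, mul_add]
  have hT2a : (∑ γ, ∑ ν, ∑ m, e γ * (c α β m * D ν (c ν m γ)))
      = ∑ ν, ∑ m, (δ - q ν - q m + q ν) • (c ν m ν * c α β m) := by
    rw [show (∑ γ, ∑ ν, ∑ m, e γ * (c α β m * D ν (c ν m γ)))
        = ∑ ν, ∑ m, ∑ γ, e γ * (c α β m * D ν (c ν m γ)) from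
      (Finset.sum_comm.trans (Finset.sum_congr rfl fun ν _ => Finset.sum_comm))]
    refine Finset.sum_congr rfl fun ν _ => Finset.sum_congr rfl fun m _ => ?_
    calc (∑ γ, e γ * (c α β m * D ν (c ν m γ)))
        = ∑ γ, (e γ * D ν (c ν m γ)) * c α β m :=
          Finset.sum_congr rfl fun γ _ => by ring
      _ = (∑ γ, e γ * D ν (c ν m γ)) * c α β m := (Finset.sum_mul _ _ _).symm
      _ = ((δ - q ν - q m + q ν) • c ν m ν) * c α β m := by rw [hhom ν m ν]
      _ = (δ - q ν - q m + q ν) • (c ν m ν * c α β m) := smul_mul_assoc _ _ _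
  have hmerge : (∑ ν, ∑ m, (1 - q ν) • (c ν m ν * c α β m))
      + (∑ ν, ∑ m, (δ - q ν - q m + q ν) • (c ν m ν * c α β m))
      = ∑ ν, ∑ m, (1 + δ - q ν - q m) • (c ν m ν * c α β m) := by
    rw [← Finset.sum_add_distrib]
    refine Finset.sum_congr rfl fun ν _ => ?_
    rw [← Finset.sum_add_distrib]
    refine Finset.sum_congr rfl fun m _ => ?_
    rw [← add_smul]; congr 1; ring
  -- right-hand side conversions
  have hR1 : (∑ γ, ∑ ν, ∑ lam, e γ * (D lam (c α lam ν) * c ν β γ))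
      = ∑ m, (∑ γ, e γ * c β m γ) * ∑ lam, D lam (c lam α m) := by
    calc (∑ γ, ∑ ν, ∑ lam, e γ * (D lam (c α lam ν) * c ν β γ))
        = ∑ ν, ∑ γ, ∑ lam, e γ * (D lam (c α lam ν) * c ν β γ) := Finset.sum_comm
      _ = ∑ ν, ∑ γ, ∑ lam, (e γ * c β ν γ) * D lam (c lam α ν) := by
          refine Finset.sum_congr rfl fun ν _ => Finset.sum_congr rfl fun γ _ =>
            Finset.sum_congr rfl fun lam _ => ?_
          rw [hupsym ν β, hupsym α lam]; ring
      _ = ∑ m, (∑ γ, e γ * c β m γ) * ∑ lam, D lam (c lam α m) := by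
          refine Finset.sum_congr rfl fun ν _ => ?_
          rw [Finset.sum_mul]
          refine Finset.sum_congr rfl fun γ _ => (Finset.mul_sum _ _ _).symm
  have hR2 : (∑ γ, ∑ ν, ∑ lam, e γ * (c α ν γ * D lam (c β lam ν)))
      = ∑ m, (∑ γ, e γ * c α m γ) * ∑ lam, D lam (c lam β m) := by
    calc (∑ γ, ∑ ν, ∑ lam, e γ * (c α ν γ * D lam (c β lam ν)))
        = ∑ ν, ∑ γ, ∑ lam, e γ * (c α ν γ * D lam (c β lam ν)) := Finset.sum_comm
      _ = ∑ ν, ∑ γ, ∑ lam, (e γ * c α ν γ) * D lam (c lam β ν) := by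
          refine Finset.sum_congr rfl fun ν _ => Finset.sum_congr rfl fun γ _ =>
            Finset.sum_congr rfl fun lam _ => ?_
          rw [hupsym β lam]; ring
      _ = ∑ m, (∑ γ, e γ * c α m γ) * ∑ lam, D lam (c lam β m) := by
          refine Finset.sum_congr rfl fun ν _ => ?_
          rw [Finset.sum_mul]
          refine Finset.sum_congr rfl fun γ _ => (Finset.mul_sum _ _ _).symm
  have hB : (∑ γ, ∑ σ, c γ σ γ * c α β σ) = ∑ m, (∑ s, c s m s) * c α β m := by
    rw [Finset.sum_comm]
    exact Finset.sum_congr rfl fun m _ => (Finset.sum_mul _ _ _).symm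
  -- isolate X from the two symmetrized identities
  have eXa := eq_sub_of_add_eq hX1
  rw [hTa, hWmain] at eXa
  have eXb := eq_sub_of_add_eq hX2
  rw [hTb, hWmain] at eXb
  have h2X := congrArg₂ (α := R) (β := R) HAdd.hAdd eXa eXb
  have hhalf : (∑ γ, ∑ ν, ∑ m, e γ * (c ν m γ * D ν (c α β m)))
      = (1/2 : ℂ) • ((∑ γ, ∑ ν, ∑ m, e γ * (c ν m γ * D ν (c α β m)))
          + (∑ γ, ∑ ν, ∑ m, e γ * (c ν m γ * D ν (c α β m)))) := by
    rw [← two_smul ℂ, smul_smul]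
    norm_num
  have hPP : (1/2 : ℂ) • ((∑ m, (1 + δ - q m - δ/2) • ((∑ s, c s m s) * c α β m))
      + (∑ m, (1 + δ - q m - δ/2) • ((∑ s, c s m s) * c α β m)))
      = ∑ m, (1 + δ - q m - δ/2) • ((∑ s, c s m s) * c α β m) := by
    rw [← two_smul ℂ, smul_smul]
    norm_num
  have hTsum : (1/2 : ℂ) • ((∑ m, (1 + δ - q α - δ/2) • ((∑ s, c s m s) * c α β m))
      + (∑ m, (1 + δ - q β - δ/2) • ((∑ s, c s m s) * c α β m)))
      = ((2 - (q α - δ/2) - (q β - δ/2))/2) • ∑ m, (∑ s, c s m s) * c α β m := by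
    rw [← Finset.sum_add_distrib, Finset.smul_sum, Finset.smul_sum]
    refine Finset.sum_congr rfl fun m _ => ?_
    rw [smul_add, smul_smul, smul_smul, ← add_smul]
    congr 1; ring
  calc (∑ ν, ∑ m, (1 - q ν) • (c ν m ν * c α β m))
      + (∑ γ, ∑ ν, ∑ m, e γ * D ν (c ν m γ * c α β m))
      = (∑ ν, ∑ m, (1 - q ν) • (c ν m ν * c α β m))
        + ((∑ γ, ∑ ν, ∑ m, e γ * (c ν m γ * D ν (c α β m)))
          + ∑ ν, ∑ m, (δ - q ν - q m + q ν) • (c ν m ν * c α β m)) := by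
        rw [hsplitT2, hT2a]
    _ = ((∑ ν, ∑ m, (1 - q ν) • (c ν m ν * c α β m))
          + (∑ ν, ∑ m, (δ - q ν - q m + q ν) • (c ν m ν * c α β m)))
        + (∑ γ, ∑ ν, ∑ m, e γ * (c ν m γ * D ν (c α β m))) := by abel
    _ = (∑ m, (1 + δ - q m - δ/2) • ((∑ s, c s m s) * c α β m))
        + (∑ γ, ∑ ν, ∑ m, e γ * (c ν m γ * D ν (c α β m))) := by
        rw [hmerge, hWmain]
    _ = (∑ m, (1 + δ - q m - δ/2) • ((∑ s, c s m s) * c α β m))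
        + (1/2 : ℂ) • (((∑ m, (∑ γ, e γ * c α m γ) * ∑ lam, D lam (c lam β m))
              + (∑ m, (1 + δ - q α - δ/2) • ((∑ s, c s m s) * c α β m))
              - (∑ m, (1 + δ - q m - δ/2) • ((∑ s, c s m s) * c α β m)))
            + ((∑ m, (∑ γ, e γ * c β m γ) * ∑ lam, D lam (c lam α m))
              + (∑ m, (1 + δ - q β - δ/2) • ((∑ s, c s m s) * c α β m))
              - (∑ m, (1 + δ - q m - δ/2) • ((∑ s, c s m s) * c α β m)))) := by
        rw [hhalf, h2X]
    _ = (∑ m, (1 + δ - q m - δ/2) • ((∑ s, c s m s) * c α β m))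
        + ((1/2 : ℂ) • (((∑ m, (1 + δ - q α - δ/2) • ((∑ s, c s m s) * c α β m))
              + (∑ m, (1 + δ - q β - δ/2) • ((∑ s, c s m s) * c α β m)))
            + ((∑ m, (∑ γ, e γ * c β m γ) * ∑ lam, D lam (c lam α m))
              + (∑ m, (∑ γ, e γ * c α m γ) * ∑ lam, D lam (c lam β m))))
          - (1/2 : ℂ) • ((∑ m, (1 + δ - q m - δ/2) • ((∑ s, c s m s) * c α β m))
              + (∑ m, (1 + δ - q m - δ/2) • ((∑ s, c s m s) * c α β m)))) := by
        rw [← smul_sub]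
        congr 2
        abel
    _ = (1/2 : ℂ) • (((∑ m, (1 + δ - q α - δ/2) • ((∑ s, c s m s) * c α β m))
              + (∑ m, (1 + δ - q β - δ/2) • ((∑ s, c s m s) * c α β m)))
            + ((∑ m, (∑ γ, e γ * c β m γ) * ∑ lam, D lam (c lam α m))
              + (∑ m, (∑ γ, e γ * c α m γ) * ∑ lam, D lam (c lam β m)))) := by
        rw [hPP]; abel
    _ = (1/2 : ℂ) • ((∑ m, (1 + δ - q α - δ/2) • ((∑ s, c s m s) * c α β m))
              + (∑ m, (1 + δ - q β - δ/2) • ((∑ s, c s m s) * c α β m)))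
        + (1/2 : ℂ) • ((∑ m, (∑ γ, e γ * c β m γ) * ∑ lam, D lam (c lam α m))
              + (∑ m, (∑ γ, e γ * c α m γ) * ∑ lam, D lam (c lam β m))) := by
        rw [smul_add]
    _ = ((2 - (q α - δ/2) - (q β - δ/2))/2) • (∑ γ, ∑ σ, c γ σ γ * c α β σ)
        + (1/2 : ℂ) • ((∑ γ, ∑ ν, ∑ lam, e γ * (D lam (c α lam ν) * c ν β γ))
            + ∑ γ, ∑ ν, ∑ lam, e γ * (c α ν γ * D lam (c β lam ν))) := by
        rw [hB, hTsum, hR1, hR2]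
end
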